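/- arXiv:2104.08738 — 7 statements merged into one kernel-verified Lean document; each statement's English description precedes it below -/
import Mathlib

section
/- Let d ≥ 1 and let g : ℝ^d → ℝ be a function in H¹(ℝ^d). Then there is a constant C depending only on d such that ‖g‖_{L²(ℝ^d)} ≤ C ( ‖(|x|/(1+|x|)) g‖_{L²(ℝ^d)} + ‖(|x|/(1+|x|)) ∇g‖_{L²(ℝ^d)} ). -/
/-!
Fix a unit vector `v` and a norming functional `ℓ` (`‖ℓ‖ = 1`, `ℓ v = 1`), and put
`φ t = t / (1 + t²)`. The derivative of `g² · φ ∘ ℓ` in direction `v` integrates to zero, and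
since `φ' = 1` at the origin, where the weight `w t = |t| / (1 + |t|)` vanishes, it controls `g²`
there: pointwise `g² ≤ 2 ∂ᵥ(g² · φ ∘ ℓ) + 8 w(ℓ x)² (g² + (∂ᵥ g)²)`. As `w(ℓ x) ≤ ‖x‖ / (1 + ‖x‖)`
and `|∂ᵥ g| ≤ ‖Dg‖`, integration gives `‖g‖₂² ≤ 8 (‖w g‖₂² + ‖w Dg‖₂²)`, whence `C = 3`.
-/

open MeasureTheory

lemma hasDerivAt_div_one_add_sq (t : ℝ) :
    HasDerivAt (fun t : ℝ => t / (1 + t ^ 2)) ((1 - t ^ 2) / (1 + t ^ 2) ^ 2) t := by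
  have h := (hasDerivAt_id t).div ((hasDerivAt_pow 2 t).const_add 1) (by positivity)
  refine h.congr_deriv ?_
  simp only [id_eq]
  field_simp
  ring

lemma abs_div_one_add_sq_le_one (t : ℝ) : |t / (1 + t ^ 2)| ≤ 1 := by
  rw [abs_div, abs_of_pos (show (0:ℝ) < 1 + t ^ 2 by positivity), div_le_one (by positivity)]
  nlinarith [sq_nonneg (|t| - 1), sq_abs t]

lemma abs_one_sub_sq_div_one_add_sq_sq_le_one (t : ℝ) :
    |(1 - t ^ 2) / (1 + t ^ 2) ^ 2| ≤ 1 := by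
  rw [abs_div, abs_of_pos (show (0:ℝ) < (1 + t ^ 2) ^ 2 by positivity),
    div_le_one (by positivity), abs_le]
  constructor <;> nlinarith [sq_nonneg t, sq_nonneg (t ^ 2)]

lemma div_one_add_le_div_one_add {r s : ℝ} (hr : 0 ≤ r) (hrs : r ≤ s) :
    r / (1 + r) ≤ s / (1 + s) := by
  rw [div_le_div_iff₀ (by positivity) (by linarith)]
  linarith

lemma quadratic_form_nonneg {P Q R x y : ℝ} (hP : 0 < P) (hR : R ^ 2 ≤ P * Q) :
    0 ≤ P * x ^ 2 - 2 * R * x * y + Q * y ^ 2 := by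
  have key : P * (P * x ^ 2 - 2 * R * x * y + Q * y ^ 2)
      = (P * x - R * y) ^ 2 + (P * Q - R ^ 2) * y ^ 2 := by ring
  refine (mul_nonneg_iff_of_pos_left hP).1 ?_
  rw [key]
  exact add_nonneg (sq_nonneg _) (mul_nonneg (sub_nonneg.2 hR) (sq_nonneg _))

/-- The bracket is the derivative of `a(t)² t / (1 + t²)` when `a' = b`. After multiplying by
`(1 + t²)² (1 + |t|)²`, the claim is the nonnegativity of a quadratic form in `|a|, |b|`. -/
lemma sq_le_deriv_add_weighted_sq (t a b : ℝ) :
    a ^ 2 ≤ 2 * (2 * a * b * (t / (1 + t ^ 2)) + a ^ 2 * ((1 - t ^ 2) / (1 + t ^ 2) ^ 2))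
      + 8 * (|t| / (1 + |t|)) ^ 2 * (a ^ 2 + b ^ 2) := by
  set s := |t| with hs_def
  have hs : 0 ≤ s := abs_nonneg t
  have ht2 : t ^ 2 = s ^ 2 := (sq_abs t).symm
  have hcross : -(2 * |a| * |b| * s) ≤ 2 * a * b * t := by
    have : |2 * a * b * t| = 2 * |a| * |b| * s := by simp [abs_mul, hs_def]
    linarith [neg_abs_le (2 * a * b * t)]
  set P := 2 * (1 - s ^ 2) * (1 + s) ^ 2 + 8 * s ^ 2 * (1 + s ^ 2) ^ 2
    - (1 + s ^ 2) ^ 2 * (1 + s) ^ 2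
  set R := 2 * s * (1 + s ^ 2) * (1 + s) ^ 2
  set Q := 8 * s ^ 2 * (1 + s ^ 2) ^ 2
  have hpoly : 4 * (1 + s) ^ 4 ≤ 8 * P := by
    nlinarith [sq_nonneg (s - s ^ 2), sq_nonneg s, sq_nonneg (s ^ 2), sq_nonneg (s ^ 3),
      sq_nonneg (s ^ 3 - s), sq_nonneg (s ^ 2 - s / 2)]
  have hP : 0 < P := by nlinarith [pow_pos (by linarith : (0:ℝ) < 1 + s) 4]
  have hform := quadratic_form_nonneg (x := |a|) (y := |b|) hP (by
    have : R ^ 2 = s ^ 2 * (1 + s ^ 2) ^ 2 * (4 * (1 + s) ^ 4) := by ring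
    rw [this, show P * Q = s ^ 2 * (1 + s ^ 2) ^ 2 * (8 * P) by ring]
    exact mul_le_mul_of_nonneg_left hpoly (by positivity))
  rw [sq_abs, sq_abs] at hform
  rw [ht2, div_pow, ← sub_nonneg]
  have key : 2 * (2 * a * b * (t / (1 + s ^ 2)) + a ^ 2 * ((1 - s ^ 2) / (1 + s ^ 2) ^ 2))
      + 8 * (s ^ 2 / (1 + s) ^ 2) * (a ^ 2 + b ^ 2) - a ^ 2
      = (P * a ^ 2 + 2 * (2 * a * b * t) * (1 + s ^ 2) * (1 + s) ^ 2 + Q * b ^ 2)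
        / ((1 + s ^ 2) ^ 2 * (1 + s) ^ 2) := by
    field_simp
    ring
  rw [key]
  apply div_nonneg _ (by positivity)
  nlinarith [mul_le_mul_of_nonneg_right hcross (by positivity : (0:ℝ) ≤ (1 + s ^ 2) * (1 + s) ^ 2)]

lemma sq_eLpNorm_two_eq_ofReal_integral {α : Type*} [MeasurableSpace α] {μ : Measure α}
    {f : α → ℝ} (hf : MemLp f 2 μ) :
    eLpNorm f 2 μ ^ 2 = ENNReal.ofReal (∫ x, f x ^ 2 ∂μ) := by
  rw [hf.eLpNorm_eq_integral_rpow_norm two_ne_zero ENNReal.ofNat_ne_top,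
    ← ENNReal.ofReal_pow (by positivity)]
  simp only [ENNReal.toReal_ofNat, Real.rpow_two, Real.norm_eq_abs, sq_abs]
  rw [← Real.rpow_natCast, ← Real.rpow_mul (integral_nonneg fun x => sq_nonneg _)]
  norm_num

lemma MeasureTheory.MemLp.div_one_add_norm_mul {E : Type*} [NormedAddCommGroup E]
    [MeasurableSpace E] [BorelSpace E] {μ : Measure E} {p : ENNReal} {f : E → ℝ}
    (hf : MemLp f p μ) : MemLp (fun x => (‖x‖ / (1 + ‖x‖)) * f x) p μ := by
  refine hf.of_le (((continuous_norm.div (by fun_prop) fun x => by positivity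
    ).aestronglyMeasurable).mul hf.1) (ae_of_all _ fun x => ?_)
  rw [norm_mul, Real.norm_of_nonneg (by positivity)]
  exact mul_le_of_le_one_left (norm_nonneg _) ((div_le_one (by positivity)).2 (by linarith))

section

variable {E : Type*} [NormedAddCommGroup E] [NormedSpace ℝ E]

lemma sq_le_deriv_add_weighted_norm_sq {ℓ : StrongDual ℝ E} (hℓ : ‖ℓ‖ ≤ 1) {v : E}
    (hv : ‖v‖ ≤ 1) (x : E) (a : ℝ) (L : StrongDual ℝ E) :
    a ^ 2 ≤ 2 * (2 * a * L v * (ℓ x / (1 + ℓ x ^ 2)) + a ^ 2 * ((1 - ℓ x ^ 2) / (1 + ℓ x ^ 2) ^ 2))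
      + 8 * ((‖x‖ / (1 + ‖x‖)) * a) ^ 2 + 8 * ((‖x‖ / (1 + ‖x‖)) * ‖L‖) ^ 2 := by
  have hw : (|ℓ x| / (1 + |ℓ x|)) ^ 2 ≤ (‖x‖ / (1 + ‖x‖)) ^ 2 := by
    refine pow_le_pow_left₀ (by positivity) (div_one_add_le_div_one_add (abs_nonneg _) ?_) 2
    simpa using ℓ.le_of_opNorm_le hℓ x
  have hb : (L v) ^ 2 ≤ ‖L‖ ^ 2 := by
    rw [← sq_abs]
    refine pow_le_pow_left₀ (abs_nonneg _) ?_ 2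
    simpa using L.le_of_opNorm_le_of_le le_rfl hv
  have := sq_le_deriv_add_weighted_sq (ℓ x) a (L v)
  nlinarith [mul_le_mul_of_nonneg_right hw (sq_nonneg a),
    mul_le_mul hw hb (sq_nonneg _) (sq_nonneg _)]

variable [MeasurableSpace E] [BorelSpace E] {μ : Measure E} {g : E → ℝ}

lemma integrable_mul_fderiv_mul_div_one_add_sq (hg : MemLp g 2 μ) (hDg : MemLp (fderiv ℝ g) 2 μ)
    (ℓ : StrongDual ℝ E) (v : E) :
    Integrable (fun x => 2 * g x * fderiv ℝ g x v * (ℓ x / (1 + ℓ x ^ 2))) μ :=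
  ((hg.const_mul 2).integrable_mul ((ContinuousLinearMap.apply ℝ ℝ v).comp_memLp' hDg)).mul_bdd
    (ℓ.continuous.div (by fun_prop) fun x => by positivity).aestronglyMeasurable
    (ae_of_all _ fun x => abs_div_one_add_sq_le_one (ℓ x))

lemma integrable_sq_mul_one_sub_sq_div_one_add_sq_sq (hg : MemLp g 2 μ) (ℓ : StrongDual ℝ E) :
    Integrable (fun x => g x ^ 2 * ((1 - ℓ x ^ 2) / (1 + ℓ x ^ 2) ^ 2)) μ :=
  hg.integrable_sq.mul_bdd
    ((by fun_prop : Continuous fun x => 1 - ℓ x ^ 2).div (by fun_prop)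
      fun x => by positivity).aestronglyMeasurable
    (ae_of_all _ fun x => abs_one_sub_sq_div_one_add_sq_sq_le_one (ℓ x))

variable [FiniteDimensional ℝ E] [μ.IsAddHaarMeasure]

lemma integral_deriv_sq_mul_div_one_add_sq_eq_zero (hg : MemLp g 2 μ)
    (hgd : Differentiable ℝ g) (hDg : MemLp (fderiv ℝ g) 2 μ) (ℓ : StrongDual ℝ E) (v : E) :
    ∫ x, (2 * g x * fderiv ℝ g x v * (ℓ x / (1 + ℓ x ^ 2))
      + g x ^ 2 * ((1 - ℓ x ^ 2) / (1 + ℓ x ^ 2) ^ 2) * ℓ v) ∂μ = 0 := by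
  have h1 := integrable_mul_fderiv_mul_div_one_add_sq hg hDg ℓ v
  have h2 := (integrable_sq_mul_one_sub_sq_div_one_add_sq_sq hg ℓ).mul_const (ℓ v)
  have h3 : Integrable (fun x => g x ^ 2 * (ℓ x / (1 + ℓ x ^ 2))) μ :=
    hg.integrable_sq.mul_bdd
      (ℓ.continuous.div (by fun_prop) fun x => by positivity).aestronglyMeasurable
      (ae_of_all _ fun x => abs_div_one_add_sq_le_one (ℓ x))
  have hibp := integral_bilinear_hasFDerivAt_right_eq_neg_left_of_integrable
    (μ := μ) (B := ContinuousLinearMap.mul ℝ ℝ) (v := v)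
    (f := fun x => g x ^ 2) (f' := fun x => (2 * g x) • fderiv ℝ g x)
    (g := fun x => ℓ x / (1 + ℓ x ^ 2))
    (g' := fun x => ((1 - ℓ x ^ 2) / (1 + ℓ x ^ 2) ^ 2) • ℓ)
    (by simpa using h1) (by simpa [mul_assoc] using h2) (by simpa using h3)
    (fun x _ => ((hgd x).hasFDerivAt.pow 2).congr_fderiv (by simp))
    (fun x _ => (hasDerivAt_div_one_add_sq (ℓ x)).comp_hasFDerivAt x ℓ.hasFDerivAt)
  simp only [ContinuousLinearMap.mul_apply', FunLike.coe_smul, Pi.smul_apply,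
    smul_eq_mul] at hibp
  rw [integral_add h1 h2]
  simp only [mul_assoc] at hibp ⊢
  linarith

lemma integral_sq_le_eight_mul_weighted [Nontrivial E] (hg : MemLp g 2 μ)
    (hgd : Differentiable ℝ g) (hDg : MemLp (fderiv ℝ g) 2 μ) :
    ∫ x, g x ^ 2 ∂μ ≤ 8 * ∫ x, ((‖x‖ / (1 + ‖x‖)) * g x) ^ 2 ∂μ
      + 8 * ∫ x, ((‖x‖ / (1 + ‖x‖)) * ‖fderiv ℝ g x‖) ^ 2 ∂μ := by
  obtain ⟨v, hv⟩ := exists_norm_eq E zero_le_one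
  obtain ⟨ℓ, hℓ, hℓv⟩ := exists_dual_vector ℝ v (by rw [hv]; exact one_ne_zero)
  have hIBP := integral_deriv_sq_mul_div_one_add_sq_eq_zero (μ := μ) hg hgd hDg ℓ v
  simp only [hℓv, hv, RCLike.ofReal_one, mul_one] at hIBP
  have hG : Integrable (fun x => 2 * (2 * g x * fderiv ℝ g x v * (ℓ x / (1 + ℓ x ^ 2))
      + g x ^ 2 * ((1 - ℓ x ^ 2) / (1 + ℓ x ^ 2) ^ 2))) μ :=
    ((integrable_mul_fderiv_mul_div_one_add_sq hg hDg ℓ v).add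
      (integrable_sq_mul_one_sub_sq_div_one_add_sq_sq hg ℓ)).const_mul 2
  have hWg := hg.div_one_add_norm_mul.integrable_sq
  have hWDg := hDg.norm.div_one_add_norm_mul.integrable_sq
  calc ∫ x, g x ^ 2 ∂μ ≤ ∫ x, (2 * (2 * g x * fderiv ℝ g x v * (ℓ x / (1 + ℓ x ^ 2))
      + g x ^ 2 * ((1 - ℓ x ^ 2) / (1 + ℓ x ^ 2) ^ 2))
      + 8 * ((‖x‖ / (1 + ‖x‖)) * g x) ^ 2 + 8 * ((‖x‖ / (1 + ‖x‖)) * ‖fderiv ℝ g x‖) ^ 2) ∂μ :=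
        integral_mono hg.integrable_sq ((hG.add (hWg.const_mul 8)).add (hWDg.const_mul 8))
          fun x => sq_le_deriv_add_weighted_norm_sq hℓ.le hv.le x (g x) (fderiv ℝ g x)
    _ = _ := by
      rw [integral_add ?_ (hWDg.const_mul 8), integral_add hG (hWg.const_mul 8),
        integral_const_mul, integral_const_mul, integral_const_mul, hIBP, mul_zero, zero_add]
      exact hG.add (hWg.const_mul 8)

theorem eLpNorm_le_three_mul_weighted [Nontrivial E] (hg : MemLp g 2 μ)
    (hgd : Differentiable ℝ g) (hDg : MemLp (fderiv ℝ g) 2 μ) :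
    eLpNorm g 2 μ ≤ 3 * (eLpNorm (fun x => (‖x‖ / (1 + ‖x‖)) * g x) 2 μ
      + eLpNorm (fun x => (‖x‖ / (1 + ‖x‖)) * ‖fderiv ℝ g x‖) 2 μ) := by
  have hWg := hg.div_one_add_norm_mul
  have hWDg := hDg.norm.div_one_add_norm_mul
  have hsq : eLpNorm g 2 μ ^ 2 ≤ 8 * (eLpNorm (fun x => (‖x‖ / (1 + ‖x‖)) * g x) 2 μ ^ 2
      + eLpNorm (fun x => (‖x‖ / (1 + ‖x‖)) * ‖fderiv ℝ g x‖) 2 μ ^ 2) := by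
    rw [sq_eLpNorm_two_eq_ofReal_integral hg, sq_eLpNorm_two_eq_ofReal_integral hWg,
      sq_eLpNorm_two_eq_ofReal_integral hWDg, ← ENNReal.ofReal_add
        (integral_nonneg fun _ => sq_nonneg _) (integral_nonneg fun _ => sq_nonneg _),
      ← ENNReal.ofReal_ofNat 8, ← ENNReal.ofReal_mul (by norm_num)]
    exact ENNReal.ofReal_le_ofReal (by linarith [integral_sq_le_eight_mul_weighted hg hgd hDg])
  rw [← ENNReal.pow_le_pow_left_iff two_ne_zero]
  refine hsq.trans ?_
  calc _ ≤ (9 : ENNReal) * (eLpNorm (fun x => (‖x‖ / (1 + ‖x‖)) * g x) 2 μ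
        + eLpNorm (fun x => (‖x‖ / (1 + ‖x‖)) * ‖fderiv ℝ g x‖) 2 μ) ^ 2 := by
        gcongr
        · norm_num
        · rw [add_sq]
          gcongr
          exact le_self_add
    _ = _ := by ring

end

/-- Hardy-type inequality: for `g ∈ H¹(ℝ^d)`, the `L²` norm of `g` is controlled by the
weighted `L²` norms of `g` and `∇g` with weight `|x|/(1+|x|)`, with a constant depending
only on the dimension. -/
theorem stmt_0 (d : ℕ) (hd : 1 ≤ d) :
    ∃ C : ℝ, 0 < C ∧
      ∀ g : EuclideanSpace ℝ (Fin d) → ℝ,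
        MemLp g 2 volume → Differentiable ℝ g →
        MemLp (fun x => fderiv ℝ g x) 2 volume →
        eLpNorm g 2 volume ≤ ENNReal.ofReal C *
          (eLpNorm (fun x => (‖x‖ / (1 + ‖x‖)) * g x) 2 volume
            + eLpNorm (fun x => (‖x‖ / (1 + ‖x‖)) * ‖fderiv ℝ g x‖) 2 volume) := by
  have : Nonempty (Fin d) := ⟨⟨0, hd⟩⟩
  refine ⟨3, by norm_num, fun g hg hgd hDg => ?_⟩
  rw [ENNReal.ofReal_ofNat]
  exact eLpNorm_le_three_mul_weighted hg hgd hDg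
end

section
/- Let ρ̃, c̃ : [0,∞) × 𝕋 → ℝ be smooth solutions of the linear system ∂ₜρ̃ = -∂ₓₓ c̃, ∂ₜc̃ = -e^{-t} ρ̃ - c̃. Then for all t ≥ 0, (1/2) d/dt ( ‖ρ̃(t)‖²_{L²} + eᵗ ‖∂ₓ c̃(t)‖²_{L²} ) = -(1/2) eᵗ ‖∂ₓ c̃(t)‖²_{L²} ≤ 0. In particular, the energy ‖ρ̃(t)‖²_{L²} + eᵗ‖∂ₓ c̃(t)‖²_{L²} is non-increasing in time. -/
open Set MeasureTheory intervalIntegral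

noncomputable section StmtAux

/-- The closed right half-plane. -/
def Sq : Set (ℝ × ℝ) := Ici (0:ℝ) ×ˢ (univ : Set ℝ)

/-- Uncurried version of a two-parameter function. -/
def F2 (f : ℝ → ℝ → ℝ) : ℝ × ℝ → ℝ := fun p => f p.1 p.2

lemma uniqueDiffOn_Sq : UniqueDiffOn ℝ Sq :=
  (uniqueDiffOn_Ici 0).prod uniqueDiffOn_univ

lemma line_mem {t : ℝ} (ht : 0 ≤ t) (x : ℝ) : (t, x) ∈ Sq := ⟨ht, mem_univ _⟩

lemma line_hasDerivAt (t x : ℝ) : HasDerivAt (fun y : ℝ => (t, y)) ((0:ℝ), (1:ℝ)) x :=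
  HasDerivAt.prodMk (hasDerivAt_const x t) (hasDerivAt_id x)

lemma lineT_hasDerivAt (t x : ℝ) : HasDerivAt (fun s : ℝ => (s, x)) ((1:ℝ), (0:ℝ)) t :=
  HasDerivAt.prodMk (hasDerivAt_id t) (hasDerivAt_const t x)

lemma line_contDiff (t : ℝ) : ContDiff ℝ (⊤ : ℕ∞) (fun y : ℝ => (t, y)) :=
  ContDiff.prodMk contDiff_const contDiff_id

variable {f : ℝ → ℝ → ℝ} (hf : ContDiffOn ℝ (⊤ : ℕ∞) (F2 f) Sq)

include hf

lemma slice_contDiff {t : ℝ} (ht : 0 ≤ t) : ContDiff ℝ (⊤ : ℕ∞) (f t) := by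
  rw [← contDiffOn_univ]
  exact hf.comp (line_contDiff t).contDiffOn (fun y _ => line_mem ht y)

lemma slice_hasDerivAt {t : ℝ} (ht : 0 ≤ t) (x : ℝ) :
    HasDerivAt (f t) (fderivWithin ℝ (F2 f) Sq (t, x) (0, 1)) x := by
  have hd : HasFDerivWithinAt (F2 f) (fderivWithin ℝ (F2 f) Sq (t, x)) Sq (t, x) :=
    ((hf.differentiableOn (by simp)) (t, x) (line_mem ht x)).hasFDerivWithinAt
  have := hd.comp_hasDerivWithinAt x ((line_hasDerivAt t x).hasDerivWithinAt (s := univ))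
    (fun y _ => line_mem ht y)
  rwa [hasDerivWithinAt_univ] at this

lemma deriv_slice_eq {t : ℝ} (ht : 0 ≤ t) (x : ℝ) :
    deriv (f t) x = fderivWithin ℝ (F2 f) Sq (t, x) (0, 1) :=
  (slice_hasDerivAt hf ht x).deriv

lemma continuousOn_deriv_slice :
    ContinuousOn (fun p : ℝ × ℝ => deriv (f p.1) p.2) Sq := by
  have h1 : ContDiffOn ℝ (⊤ : ℕ∞) (fderivWithin ℝ (F2 f) Sq) Sq :=
    hf.fderivWithin uniqueDiffOn_Sq (by simp)
  have h2 : ContinuousOn (fun p : ℝ × ℝ => fderivWithin ℝ (F2 f) Sq p (0, 1)) Sq :=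
    (h1.continuousOn).clm_apply continuousOn_const
  exact h2.congr (fun p hp => deriv_slice_eq hf hp.1 p.2)

lemma deriv2_slice_hasDerivAt {t : ℝ} (ht : 0 ≤ t) (x : ℝ) :
    HasDerivAt (deriv (f t))
      (fderivWithin ℝ (fderivWithin ℝ (F2 f) Sq) Sq (t, x) (0, 1) (0, 1)) x := by
  have h1 : ContDiffOn ℝ (⊤ : ℕ∞) (fderivWithin ℝ (F2 f) Sq) Sq :=
    hf.fderivWithin uniqueDiffOn_Sq (by simp)
  have hd : HasFDerivWithinAt (fderivWithin ℝ (F2 f) Sq)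
      (fderivWithin ℝ (fderivWithin ℝ (F2 f) Sq) Sq (t, x)) Sq (t, x) :=
    ((h1.differentiableOn (by simp)) (t, x) (line_mem ht x)).hasFDerivWithinAt
  have h2 := hd.comp_hasDerivWithinAt x
    ((line_hasDerivAt t x).hasDerivWithinAt (s := univ)) (fun y _ => line_mem ht y)
  rw [hasDerivWithinAt_univ] at h2
  have h3 := ((ContinuousLinearMap.apply ℝ ℝ ((0:ℝ),(1:ℝ))).hasFDerivAt).comp_hasDerivAt x h2
  refine h3.congr_of_eventuallyEq ?_
  filter_upwards [] with y
  exact deriv_slice_eq hf ht y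

lemma deriv2_slice_eq {t : ℝ} (ht : 0 ≤ t) (x : ℝ) :
    deriv (deriv (f t)) x
      = fderivWithin ℝ (fderivWithin ℝ (F2 f) Sq) Sq (t, x) (0, 1) (0, 1) :=
  (deriv2_slice_hasDerivAt hf ht x).deriv

lemma continuousOn_deriv2_slice :
    ContinuousOn (fun p : ℝ × ℝ => deriv (deriv (f p.1)) p.2) Sq := by
  have h1 : ContDiffOn ℝ (⊤ : ℕ∞) (fderivWithin ℝ (fderivWithin ℝ (F2 f) Sq) Sq) Sq :=
    (hf.fderivWithin uniqueDiffOn_Sq (by simp) : ContDiffOn ℝ (⊤ : ℕ∞) (fderivWithin ℝ (F2 f) Sq) Sq).fderivWithin uniqueDiffOn_Sq (by simp)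
  have h2 : ContinuousOn
      (fun p : ℝ × ℝ => fderivWithin ℝ (fderivWithin ℝ (F2 f) Sq) Sq p (0, 1) (0, 1)) Sq :=
    ((h1.continuousOn).clm_apply continuousOn_const).clm_apply continuousOn_const
  exact h2.congr (fun p hp => deriv2_slice_eq hf hp.1 p.2)

omit hf

theorem mixed_swap {ρ c : ℝ → ℝ → ℝ}
    (hfρ : ContDiffOn ℝ (⊤ : ℕ∞) (F2 ρ) Sq) (hfc : ContDiffOn ℝ (⊤ : ℕ∞) (F2 c) Sq)
    (hceq : ∀ x : ℝ, ∀ t ∈ Ici (0:ℝ),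
      HasDerivWithinAt (fun s => c s x) (-(Real.exp (-t) * ρ t x) - c t x) (Ici 0) t)
    {t : ℝ} (ht : 0 < t) (x : ℝ) :
    HasDerivAt (fun s => deriv (c s) x)
      (-(Real.exp (-t) * deriv (ρ t) x) - deriv (c t) x) t := by
  set V : Set (ℝ × ℝ) := Ioi (0:ℝ) ×ˢ (univ : Set ℝ) with hVdef
  have hVo : IsOpen V := isOpen_Ioi.prod isOpen_univ
  have hVS : V ⊆ Sq := prod_mono_left Ioi_subset_Ici_self
  have hcV : ContDiffOn ℝ (⊤ : ℕ∞) (F2 c) V := hfc.mono hVS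
  have hmemV : ∀ s > (0:ℝ), ∀ y, (s, y) ∈ V := fun s hs y => ⟨hs, mem_univ _⟩
  have hdiff : ∀ p ∈ V, DifferentiableAt ℝ (F2 c) p := fun p hp =>
    (hcV.differentiableOn (by simp)).differentiableAt (hVo.mem_nhds hp)
  have hfdV : ContDiffOn ℝ (⊤ : ℕ∞) (fderiv ℝ (F2 c)) V := hcV.fderiv_of_isOpen hVo (by simp)
  have hfd2 : HasFDerivAt (fderiv ℝ (F2 c)) (fderiv ℝ (fderiv ℝ (F2 c)) (t, x)) (t, x) :=
    (((hfdV.differentiableOn (by simp))).differentiableAt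
      (hVo.mem_nhds (hmemV t ht x))).hasFDerivAt
  have hsymm : IsSymmSndFDerivAt ℝ (F2 c) (t, x) :=
    (hcV.contDiffAt (hVo.mem_nhds (hmemV t ht x))).isSymmSndFDerivAt (by rw [minSmoothness_of_isRCLikeNormedField]; exact WithTop.coe_le_coe.mpr (le_top : (2:ℕ∞) ≤ ⊤))
  have hrep : ∀ s > (0:ℝ), ∀ y : ℝ, deriv (c s) y = fderiv ℝ (F2 c) (s, y) (0, 1) := by
    intro s hs y
    exact (((hdiff _ (hmemV s hs y)).hasFDerivAt).comp_hasDerivAt y (line_hasDerivAt s y)).deriv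
  have h2 := hfd2.comp_hasDerivAt t (lineT_hasDerivAt t x)
  have h3 := ((ContinuousLinearMap.apply ℝ ℝ ((0:ℝ),(1:ℝ))).hasFDerivAt).comp_hasDerivAt t h2
  have h4 : HasDerivAt (fun s => deriv (c s) x)
      (fderiv ℝ (fderiv ℝ (F2 c)) (t, x) (1, 0) (0, 1)) t := by
    refine h3.congr_of_eventuallyEq ?_
    filter_upwards [eventually_gt_nhds ht] with s hs
    exact hrep s hs x
  have h5 := hfd2.comp_hasDerivAt x (line_hasDerivAt t x)
  have h6 := ((ContinuousLinearMap.apply ℝ ℝ ((1:ℝ),(0:ℝ))).hasFDerivAt).comp_hasDerivAt x h5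
  have heq : ∀ y : ℝ, fderiv ℝ (F2 c) (t, y) (1, 0) = -(Real.exp (-t) * ρ t y) - c t y := by
    intro y
    have ha : HasDerivAt (fun s => c s y) (fderiv ℝ (F2 c) (t, y) (1, 0)) t :=
      by have := ((hdiff _ (hmemV t ht y)).hasFDerivAt).comp_hasDerivAt t (lineT_hasDerivAt t y)
         exact this
    have hb : HasDerivAt (fun s => c s y) (-(Real.exp (-t) * ρ t y) - c t y) t :=
      (hceq y t (le_of_lt ht)).hasDerivAt (Ici_mem_nhds ht)
    exact ha.unique hb
  have h7 : HasDerivAt (fun y => -(Real.exp (-t) * ρ t y) - c t y)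
      (fderiv ℝ (fderiv ℝ (F2 c)) (t, x) (0, 1) (1, 0)) x := by
    refine h6.congr_of_eventuallyEq ?_
    filter_upwards [] with y
    exact (heq y).symm
  have hρd : HasDerivAt (ρ t) (deriv (ρ t) x) x :=
    (((slice_contDiff hfρ (le_of_lt ht)).differentiable (by simp)) x).hasDerivAt
  have hcd : HasDerivAt (c t) (deriv (c t) x) x :=
    (((slice_contDiff hfc (le_of_lt ht)).differentiable (by simp)) x).hasDerivAt
  have h8 : HasDerivAt (fun y => -(Real.exp (-t) * ρ t y) - c t y)
      (-(Real.exp (-t) * deriv (ρ t) x) - deriv (c t) x) x :=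
    ((hρd.const_mul (Real.exp (-t))).neg).sub hcd
  have hkey : fderiv ℝ (fderiv ℝ (F2 c)) (t, x) (1, 0) (0, 1)
      = -(Real.exp (-t) * deriv (ρ t) x) - deriv (c t) x := by
    rw [hsymm (1,0) (0,1)]
    exact h7.unique h8
  rwa [hkey] at h4

end StmtAux

/-- Energy identity. -/
theorem stmt_4 (ρ c : ℝ → ℝ → ℝ)
    (hsmooth : ContDiffOn ℝ (⊤ : ℕ∞) (fun p : ℝ × ℝ => (ρ p.1 p.2, c p.1 p.2))
      (Ici (0:ℝ) ×ˢ univ))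
    (hperρ : ∀ t, Function.Periodic (ρ t) 1)
    (hperc : ∀ t, Function.Periodic (c t) 1)
    (hρeq : ∀ x : ℝ, ∀ t ∈ Ici (0:ℝ),
      HasDerivWithinAt (fun s => ρ s x) (-(deriv (deriv (c t)) x)) (Ici 0) t)
    (hceq : ∀ x : ℝ, ∀ t ∈ Ici (0:ℝ),
      HasDerivWithinAt (fun s => c s x) (-(Real.exp (-t) * ρ t x) - c t x) (Ici 0) t) :
    (∀ t ∈ Ici (0:ℝ),
      HasDerivWithinAt
        (fun s => (∫ x in (0:ℝ)..1, (ρ s x) ^ 2)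
          + Real.exp s * ∫ x in (0:ℝ)..1, (deriv (c s) x) ^ 2)
        (-(Real.exp t * ∫ x in (0:ℝ)..1, (deriv (c t) x) ^ 2)) (Ici 0) t) ∧
    AntitoneOn
      (fun s => (∫ x in (0:ℝ)..1, (ρ s x) ^ 2)
        + Real.exp s * ∫ x in (0:ℝ)..1, (deriv (c s) x) ^ 2) (Ici 0) := by
  have hfρ : ContDiffOn ℝ (⊤ : ℕ∞) (F2 ρ) Sq := hsmooth.fst
  have hfc : ContDiffOn ℝ (⊤ : ℕ∞) (F2 c) Sq := hsmooth.snd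
  -- the space-time integrand giving the time derivative of the energy density
  set w : ℝ → ℝ → ℝ := fun s x => -2 * ρ s x * deriv (deriv (c s)) x
      - Real.exp s * (deriv (c s) x) ^ 2 - 2 * deriv (ρ s) x * deriv (c s) x with hw
  set wt : ℝ → ℝ → ℝ := fun s x => w (max s 0) x with hwtdef
  -- joint continuity
  have hwS : ContinuousOn (fun p : ℝ × ℝ => w p.1 p.2) Sq := by
    have h1 : ContinuousOn (fun p : ℝ × ℝ => ρ p.1 p.2) Sq := hfρ.continuousOn
    have h2 := continuousOn_deriv2_slice hfc
    have h3 := continuousOn_deriv_slice hfc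
    have h4 := continuousOn_deriv_slice hfρ
    have h5 : ContinuousOn (fun p : ℝ × ℝ => Real.exp p.1) Sq :=
      (Real.continuous_exp.comp continuous_fst).continuousOn
    exact ((((continuousOn_const.mul h1).mul h2).sub (h5.mul (h3.pow 2))).sub
      ((continuousOn_const.mul h4).mul h3))
  have hwt : Continuous (fun p : ℝ × ℝ => wt p.1 p.2) := by
    have hm : Continuous (fun p : ℝ × ℝ => ((max p.1 0 : ℝ), p.2)) :=
      (continuous_fst.max continuous_const).prodMk continuous_snd
    exact hwS.comp_continuous hm (fun p => ⟨le_max_right p.1 0, mem_univ _⟩)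
  have hwteq : ∀ s, 0 ≤ s → ∀ x, wt s x = w s x := by
    intro s hs x; simp only [hwtdef, max_eq_left hs]
  -- time-continuity of pointwise quantities
  have hρcont : ∀ x, ContinuousOn (fun s => ρ s x) (Ici 0) :=
    fun x s hs => (hρeq x s hs).continuousWithinAt
  have hDccont : ∀ x, ContinuousOn (fun s => deriv (c s) x) (Ici 0) := by
    intro x
    exact (continuousOn_deriv_slice hfc).comp
      ((continuous_id.prodMk continuous_const).continuousOn)
      (fun s hs => ⟨hs, mem_univ _⟩)
  -- Claim 1 : fundamental theorem of calculus in time, for each fixed x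
  have claim1 : ∀ x : ℝ, ∀ t, 0 ≤ t →
      (∫ s in (0:ℝ)..t, wt s x)
        = (ρ t x ^ 2 + Real.exp t * (deriv (c t) x) ^ 2)
          - (ρ 0 x ^ 2 + Real.exp 0 * (deriv (c 0) x) ^ 2) := by
    intro x t ht
    apply intervalIntegral.integral_eq_sub_of_hasDeriv_right_of_le ht
    · refine ContinuousOn.mono ?_ (Icc_subset_Ici_self (a := t) (b := (0:ℝ)))
      exact ((hρcont x).pow 2).add
        ((Real.continuous_exp.continuousOn).mul ((hDccont x).pow 2))
    · intro s hs
      have hs0 : 0 < s := hs.1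
      have h1 : HasDerivAt (fun u => ρ u x) (-(deriv (deriv (c s)) x)) s :=
        (hρeq x s hs0.le).hasDerivAt (Ici_mem_nhds hs0)
      have h2 := mixed_swap hfρ hfc hceq hs0 x
      have hval : HasDerivAt
          (fun u => ρ u x ^ 2 + Real.exp u * (deriv (c u) x) ^ 2) (wt s x) s := by
        have ha := h1.pow 2
        have hb := (Real.hasDerivAt_exp s).mul (h2.pow 2)
        have hc := ha.add hb
        refine hc.congr_deriv (Eq.symm ?_)
        rw [hwteq s hs0.le, hw]
        have hexp : Real.exp (-s) = (Real.exp s)⁻¹ := Real.exp_neg s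
        have hne : Real.exp s ≠ 0 := (Real.exp_pos s).ne'
        simp only [Pi.pow_apply, hexp]
        field_simp [hexp]
        ring
      exact hval.hasDerivWithinAt
    · have : Continuous (fun s => wt s x) :=
        hwt.comp (continuous_id.prodMk continuous_const)
      exact this.intervalIntegrable 0 t
  -- Claim 3 : spatial integral of `w s` (integration by parts via periodicity)
  have claim3 : ∀ s, 0 ≤ s →
      (∫ x in (0:ℝ)..1, w s x)
        = -(Real.exp s * ∫ x in (0:ℝ)..1, (deriv (c s) x) ^ 2) := by
    intro s hs
    have hρx : Continuous (ρ s) := (slice_contDiff hfρ hs).continuous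
    have hline : ∀ y : ℝ, ((s, y) : ℝ × ℝ) ∈ Sq := fun y => ⟨hs, mem_univ _⟩
    have hlc : Continuous (fun y : ℝ => ((s, y) : ℝ × ℝ)) :=
      continuous_const.prodMk continuous_id
    have hDcx : Continuous (fun y => deriv (c s) y) :=
      (continuousOn_deriv_slice hfc).comp_continuous hlc hline
    have hDρx : Continuous (fun y => deriv (ρ s) y) :=
      (continuousOn_deriv_slice hfρ).comp_continuous hlc hline
    have hD2cx : Continuous (fun y => deriv (deriv (c s)) y) :=
      (continuousOn_deriv2_slice hfc).comp_continuous hlc hline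
    have hh : ∀ x : ℝ, HasDerivAt (fun y => ρ s y * deriv (c s) y)
        (deriv (ρ s) x * deriv (c s) x + ρ s x * deriv (deriv (c s)) x) x := by
      intro x
      have h1 : HasDerivAt (ρ s) (deriv (ρ s) x) x :=
        (((slice_contDiff hfρ hs).differentiable (by simp)) x).hasDerivAt
      have h2 : HasDerivAt (deriv (c s)) (deriv (deriv (c s)) x) x := by
        have := deriv2_slice_hasDerivAt hfc hs x
        rwa [← deriv2_slice_eq hfc hs x] at this
      exact h1.mul h2
    have hint1 : IntervalIntegrable
        (fun x => deriv (ρ s) x * deriv (c s) x + ρ s x * deriv (deriv (c s)) x)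
        volume 0 1 := ((hDρx.mul hDcx).add (hρx.mul hD2cx)).intervalIntegrable 0 1
    have hsub : (∫ x in (0:ℝ)..1,
        (deriv (ρ s) x * deriv (c s) x + ρ s x * deriv (deriv (c s)) x))
        = ρ s 1 * deriv (c s) 1 - ρ s 0 * deriv (c s) 0 := by
      apply intervalIntegral.integral_eq_sub_of_hasDerivAt (fun x _ => hh x) hint1
    have hper1 : ρ s 1 = ρ s 0 := by simpa using hperρ s 0
    have hper2 : deriv (c s) 1 = deriv (c s) 0 := by
      have hfun : (fun y => c s (y + 1)) = c s := funext (hperc s)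
      have := deriv_comp_add_const (c s) 1 0
      rw [hfun] at this
      simpa using this.symm
    have hzero : (∫ x in (0:ℝ)..1,
        (deriv (ρ s) x * deriv (c s) x + ρ s x * deriv (deriv (c s)) x)) = 0 := by
      rw [hsub, hper1, hper2]; ring
    have hrw : (fun x => w s x) = fun x =>
        (-2) * (deriv (ρ s) x * deriv (c s) x + ρ s x * deriv (deriv (c s)) x)
        + (-(Real.exp s)) * (deriv (c s) x) ^ 2 := by
      funext x; rw [hw]; ring
    rw [hrw, intervalIntegral.integral_add (hint1.const_mul _)
      ((show IntervalIntegrable (fun x => deriv (c s) x ^ 2) volume 0 1 from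
        (hDcx.pow 2).intervalIntegrable 0 1).const_mul _),
      intervalIntegral.integral_const_mul, intervalIntegral.integral_const_mul, hzero]
    ring
  -- the (continuous) candidate derivative
  set g : ℝ → ℝ := fun s => ∫ x in (0:ℝ)..1, wt s x with hgdef
  have hgc : Continuous g := by
    apply intervalIntegral.continuous_parametric_intervalIntegral_of_continuous'
      (f := fun s x => wt s x) (μ := volume)
    exact hwt
  have hg_eq : ∀ t, 0 ≤ t →
      g t = -(Real.exp t * ∫ x in (0:ℝ)..1, (deriv (c t) x) ^ 2) := by
    intro t ht
    have h1 : g t = ∫ x in (0:ℝ)..1, w t x :=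
      intervalIntegral.integral_congr (fun x _ => hwteq t ht x)
    rw [h1, claim3 t ht]
  set E : ℝ → ℝ := fun s => (∫ x in (0:ℝ)..1, (ρ s x) ^ 2)
      + Real.exp s * ∫ x in (0:ℝ)..1, (deriv (c s) x) ^ 2 with hEdef
  -- Fubini and the integral identity for E
  have hEid : ∀ t, 0 ≤ t → E t = E 0 + ∫ s in (0:ℝ)..t, g s := by
    intro t ht
    -- swap the two integrals
    have hswap : (∫ x in (0:ℝ)..1, (∫ s in (0:ℝ)..t, wt s x))
        = ∫ s in (0:ℝ)..t, (∫ x in (0:ℝ)..1, wt s x) := by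
      rw [intervalIntegral.integral_of_le zero_le_one,
          intervalIntegral.integral_of_le ht]
      simp_rw [intervalIntegral.integral_of_le ht,
          intervalIntegral.integral_of_le zero_le_one]
      apply MeasureTheory.integral_integral_swap
      rw [Measure.prod_restrict]
      have hcomp : IsCompact (Icc (0:ℝ) 1 ×ˢ Icc (0:ℝ) t) :=
        isCompact_Icc.prod isCompact_Icc
      have hcont : Continuous (Function.uncurry fun x s => wt s x) :=
        hwt.comp (continuous_snd.prodMk continuous_fst)
      have hI : IntegrableOn (Function.uncurry fun x s => wt s x)
          (Icc (0:ℝ) 1 ×ˢ Icc (0:ℝ) t) (volume.prod volume) := by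
        rw [← Measure.volume_eq_prod]
        exact hcont.continuousOn.integrableOn_compact hcomp
      exact hI.mono_set (prod_mono Ioc_subset_Icc_self Ioc_subset_Icc_self)
    -- evaluate the inner time integral via claim1
    have hL : (∫ x in (0:ℝ)..1, (∫ s in (0:ℝ)..t, wt s x))
        = ∫ x in (0:ℝ)..1,
            ((ρ t x ^ 2 + Real.exp t * (deriv (c t) x) ^ 2)
              - (ρ 0 x ^ 2 + Real.exp 0 * (deriv (c 0) x) ^ 2)) :=
      intervalIntegral.integral_congr (fun x _ => claim1 x t ht)
    -- spatial continuity (for splitting the integral)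
    have hx : ∀ u, 0 ≤ u → IntervalIntegrable
        (fun x => ρ u x ^ 2 + Real.exp u * (deriv (c u) x) ^ 2) volume 0 1 := by
      intro u hu
      have h1 : Continuous (ρ u) := (slice_contDiff hfρ hu).continuous
      have h2 : Continuous (fun y => deriv (c u) y) :=
        (continuousOn_deriv_slice hfc).comp_continuous
          (continuous_const.prodMk continuous_id) (fun y => ⟨hu, mem_univ _⟩)
      exact ((h1.pow 2).add (continuous_const.mul (h2.pow 2))).intervalIntegrable 0 1
    have hEu : ∀ u, 0 ≤ u → (∫ x in (0:ℝ)..1,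
        (ρ u x ^ 2 + Real.exp u * (deriv (c u) x) ^ 2)) = E u := by
      intro u hu
      have h1 : Continuous (ρ u) := (slice_contDiff hfρ hu).continuous
      have h2 : Continuous (fun y => deriv (c u) y) :=
        (continuousOn_deriv_slice hfc).comp_continuous
          (continuous_const.prodMk continuous_id) (fun y => ⟨hu, mem_univ _⟩)
      rw [intervalIntegral.integral_add (show IntervalIntegrable (fun x => ρ u x ^ 2) volume 0 1
        from (h1.pow 2).intervalIntegrable 0 1)
        (show IntervalIntegrable (fun x => Real.exp u * deriv (c u) x ^ 2) volume 0 1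
        from (continuous_const.mul (h2.pow 2)).intervalIntegrable 0 1),
        intervalIntegral.integral_const_mul]
    have hsplit : (∫ x in (0:ℝ)..1,
        ((ρ t x ^ 2 + Real.exp t * (deriv (c t) x) ^ 2)
          - (ρ 0 x ^ 2 + Real.exp 0 * (deriv (c 0) x) ^ 2))) = E t - E 0 := by
      rw [intervalIntegral.integral_sub (hx t ht) (hx 0 le_rfl), hEu t ht, hEu 0 le_rfl]
    have : E t - E 0 = ∫ s in (0:ℝ)..t, g s := by
      rw [← hsplit, ← hL, hswap]
    linarith
  -- part 1 : derivative of the energy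
  have part1 : ∀ t ∈ Ici (0:ℝ), HasDerivWithinAt E
      (-(Real.exp t * ∫ x in (0:ℝ)..1, (deriv (c t) x) ^ 2)) (Ici 0) t := by
    intro t ht
    have h1 : HasDerivAt (fun s => E 0 + ∫ u in (0:ℝ)..s, g u) (g t) t :=
      ((hgc.integral_hasStrictDerivAt 0 t).hasDerivAt).const_add (E 0)
    have h2 := (h1.hasDerivWithinAt (s := Ici 0)).congr
      (fun s hs => hEid s hs) (hEid t ht)
    rwa [hg_eq t ht] at h2
  refine ⟨part1, ?_⟩
  -- part 2 : monotonicity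
  have hcont : ContinuousOn E (Ici 0) := fun t ht => (part1 t ht).continuousWithinAt
  have key : ∀ t ∈ interior (Ici (0:ℝ)), HasDerivAt E
      (-(Real.exp t * ∫ x in (0:ℝ)..1, (deriv (c t) x) ^ 2)) t := by
    intro t ht
    rw [interior_Ici] at ht
    exact (part1 t (Ioi_subset_Ici_self ht)).hasDerivAt (Ici_mem_nhds ht)
  apply antitoneOn_of_deriv_nonpos (convex_Ici 0) hcont
  · intro t ht
    exact (key t ht).differentiableAt.differentiableWithinAt
  · intro t ht
    rw [(key t ht).deriv]
    have hB : 0 ≤ ∫ x in (0:ℝ)..1, (deriv (c t) x) ^ 2 :=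
      intervalIntegral.integral_nonneg zero_le_one (fun x _ => sq_nonneg _)
    have := mul_nonneg (Real.exp_pos t).le hB
    linarith
end

section
/- Let c : ℝ → ℝ be a smooth function such that c, x·c, x·c', and x·c'' are all in L²(ℝ). Then ‖c‖²_{L²} ≤ ‖x c‖_{L²} ‖x c''‖_{L²} + ‖x c'‖_{L²}². -/
open MeasureTheory

lemma myMulInt {f g : ℝ → ℝ} (hf : MemLp f 2 volume) (hg : MemLp g 2 volume) :
    Integrable (fun x => f x * g x) volume := by
  have h := hf.smul (r := 1) hg (hpqr := ⟨by
    rw [inv_one, ENNReal.inv_two_add_inv_two]⟩)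
  rw [← memLp_one_iff_integrable]
  simpa [smul_eq_mul, mul_comm, Pi.mul_def] using h

lemma myCS {f g : ℝ → ℝ} (hf : MemLp f 2 volume) (hg : MemLp g 2 volume) :
    ∫ x, f x * g x ≤ Real.sqrt (∫ x, f x ^ 2) * Real.sqrt (∫ x, g x ^ 2) := by
  have h2 : Real.HolderConjugate 2 2 := Real.HolderConjugate.two_two
  have habs : ∫ x, |f x| * |g x| ≤ (∫ x, |f x| ^ (2:ℝ)) ^ ((1:ℝ)/2) * (∫ x, |g x| ^ (2:ℝ)) ^ ((1:ℝ)/2) := by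
    have := integral_mul_le_Lp_mul_Lq_of_nonneg (μ := volume) h2
      (Filter.Eventually.of_forall fun x => abs_nonneg (f x))
      (Filter.Eventually.of_forall fun x => abs_nonneg (g x))
      (by simpa using (show MemLp (fun x => |f x|) 2 volume from hf.abs)) (by simpa using (show MemLp (fun x => |g x|) 2 volume from hg.abs))
    simpa using this
  have h1 : ∫ x, f x * g x ≤ ∫ x, |f x| * |g x| := by
    apply integral_mono (myMulInt hf hg)
    · simpa [abs_mul] using (myMulInt hf hg).abs
    · intro x
      calc f x * g x ≤ |f x * g x| := le_abs_self _
        _ = |f x| * |g x| := abs_mul _ _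
  have e1 : ∫ x, |f x| ^ (2:ℝ) = ∫ x, f x ^ 2 := by
    congr 1; funext x
    rw [Real.rpow_two, sq_abs]
  have e2 : ∫ x, |g x| ^ (2:ℝ) = ∫ x, g x ^ 2 := by
    congr 1; funext x
    rw [Real.rpow_two, sq_abs]
  calc ∫ x, f x * g x ≤ _ := h1
    _ ≤ _ := habs
    _ = Real.sqrt (∫ x, f x ^ 2) * Real.sqrt (∫ x, g x ^ 2) := by
        rw [e1, e2, Real.sqrt_eq_rpow, Real.sqrt_eq_rpow]

/-- For a smooth `c : ℝ → ℝ` with `c`, `x·c`, `x·c'`, `x·c''` all in `L²(ℝ)`,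
one has `‖c‖²_{L²} ≤ ‖xc‖_{L²} ‖xc''‖_{L²} + ‖xc'‖²_{L²}`. -/
theorem stmt_6 (c : ℝ → ℝ) (hc : ContDiff ℝ (⊤ : ℕ∞) c)
    (h0 : MemLp c 2 volume)
    (h1 : MemLp (fun x => x * c x) 2 volume)
    (h2 : MemLp (fun x => x * deriv c x) 2 volume)
    (h3 : MemLp (fun x => x * deriv (deriv c) x) 2 volume) :
    (∫ x : ℝ, (c x) ^ 2)
      ≤ Real.sqrt (∫ x : ℝ, x ^ 2 * (c x) ^ 2)
          * Real.sqrt (∫ x : ℝ, x ^ 2 * (deriv (deriv c) x) ^ 2)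
        + ∫ x : ℝ, x ^ 2 * (deriv c x) ^ 2 := by
  have hc' : ContDiff ℝ (⊤ : ℕ∞) c := hc.of_le (by simp)
  have hdc : Differentiable ℝ c := hc'.differentiable (by simp)
  have hcd := (contDiff_infty_iff_deriv.mp hc').2
  have hdc2 : Differentiable ℝ (deriv c) := hcd.differentiable (by simp)
  have hder1 : ∀ x : ℝ, HasDerivAt c (deriv c x) x := fun x => (hdc x).hasDerivAt
  have hder2 : ∀ x : ℝ, HasDerivAt (deriv c) (deriv (deriv c) x) x := fun x => (hdc2 x).hasDerivAt
  -- first identity: ∫ c² = -2 ∫ c (x c')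
  have hF : ∀ x : ℝ, HasDerivAt (fun y => y * c y * c y)
      (c x * c x + 2 * (c x * (x * deriv c x))) x := by
    intro x
    have h := (((hasDerivAt_id x).mul (hder1 x)).mul (hder1 x))
    refine h.congr_deriv ?_
    simp only [id_eq, Pi.mul_apply]
    ring
  have hFint : Integrable (fun x : ℝ => x * c x * c x) volume := myMulInt h1 h0
  have hF'int : Integrable (fun x : ℝ => c x * c x + 2 * (c x * (x * deriv c x))) volume :=
    (myMulInt h0 h0).add ((myMulInt h0 h2).const_mul 2)
  have eq1 : ∫ x : ℝ, (c x * c x + 2 * (c x * (x * deriv c x))) = 0 :=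
    integral_eq_zero_of_hasDerivAt_of_integrable hF hF'int hFint
  rw [integral_add (myMulInt h0 h0) ((myMulInt h0 h2).const_mul 2),
    MeasureTheory.integral_const_mul] at eq1
  -- second identity
  have hG : ∀ x : ℝ, HasDerivAt (fun y => y * c y * (y * deriv c y))
      (2 * (c x * (x * deriv c x)) + (x * deriv c x) * (x * deriv c x)
        + (x * c x) * (x * deriv (deriv c) x)) x := by
    intro x
    have h := ((hasDerivAt_id x).mul (hder1 x)).mul ((hasDerivAt_id x).mul (hder2 x))
    refine h.congr_deriv ?_
    simp only [id_eq, Pi.mul_apply]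
    ring
  have hGint : Integrable (fun x : ℝ => x * c x * (x * deriv c x)) volume := myMulInt h1 h2
  have hG'int : Integrable (fun x : ℝ => 2 * (c x * (x * deriv c x))
      + (x * deriv c x) * (x * deriv c x) + (x * c x) * (x * deriv (deriv c) x)) volume :=
    (((myMulInt h0 h2).const_mul 2).add (myMulInt h2 h2)).add (myMulInt h1 h3)
  have eq2 : ∫ x : ℝ, (2 * (c x * (x * deriv c x)) + (x * deriv c x) * (x * deriv c x)
      + (x * c x) * (x * deriv (deriv c) x)) = 0 :=
    integral_eq_zero_of_hasDerivAt_of_integrable hG hG'int hGint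
  rw [integral_add (show Integrable (fun x : ℝ => 2 * (c x * (x * deriv c x))
        + (x * deriv c x) * (x * deriv c x)) volume from
        ((myMulInt h0 h2).const_mul 2).add (myMulInt h2 h2)) (myMulInt h1 h3),
    integral_add ((myMulInt h0 h2).const_mul 2) (myMulInt h2 h2),
    MeasureTheory.integral_const_mul] at eq2
  -- rewrite target integrals
  have e0 : ∫ x : ℝ, (c x) ^ 2 = ∫ x : ℝ, c x * c x := by
    congr 1; funext x; ring
  have e1 : ∫ x : ℝ, x ^ 2 * (deriv c x) ^ 2 = ∫ x : ℝ, (x * deriv c x) * (x * deriv c x) := by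
    congr 1; funext x; ring
  have e2 : ∫ x : ℝ, x ^ 2 * (c x) ^ 2 = ∫ x : ℝ, (x * c x) ^ 2 := by
    congr 1; funext x; ring
  have e3 : ∫ x : ℝ, x ^ 2 * (deriv (deriv c) x) ^ 2
      = ∫ x : ℝ, (x * deriv (deriv c) x) ^ 2 := by
    congr 1; funext x; ring
  have key : ∫ x : ℝ, c x * c x
      = (∫ x : ℝ, (x * deriv c x) * (x * deriv c x))
        + ∫ x : ℝ, (x * c x) * (x * deriv (deriv c) x) := by
    nlinarith [eq1, eq2]
  have hCS : ∫ x : ℝ, (x * c x) * (x * deriv (deriv c) x)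
      ≤ Real.sqrt (∫ x : ℝ, (x * c x) ^ 2) * Real.sqrt (∫ x : ℝ, (x * deriv (deriv c) x) ^ 2) :=
    myCS h1 h3
  rw [e0, e1, e2, e3, key]
  linarith [hCS]
end

section
/- Let m ≥ 2 be an integer and suppose I₁, …, I_m are nonnegative real numbers satisfying, for each 2 ≤ ℓ ≤ m-1 and every ε > 0, the inequality I_ℓ ≤ ε I_ℓ + ε I_{ℓ-1} + C(ε, ℓ, m)(I₁ + I_{ℓ+1}) for some constants C(ε, ℓ, m) > 0. Then there exists a constant C depending only on m (and the constants C(ε,ℓ,m) for a suitable fixed choice of ε) such that I_ℓ ≤ C (I₁ + I_m) for all 1 ≤ ℓ ≤ m. -/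
/-!
Going up the chain, the bound `I ℓ ≤ A (I₁ + I_ℓ₊₁)` at one level feeds the hypothesis at the
next: choosing `ε = 1 / (2 (1 + A))` makes the `ε I_ℓ₊₁` and `ε A I_ℓ₊₁` terms absorb at most half
of `I_ℓ₊₁`, which gives `I_ℓ₊₁ ≤ A' (I₁ + I_ℓ₊₂)`. Going back down from `I_m ≤ I₁ + I_m`, these
two-term bounds chain into `I_ℓ ≤ D (I₁ + I_m)`; all constants depend only on `Cc` and `m`.
-/

def IsAbsorptionChain (m : ℕ) (Cc : ℝ → ℕ → ℝ) (I : ℕ → ℝ) : Prop :=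
  (∀ ℓ ≤ m, 0 ≤ I ℓ) ∧
    ∀ ε : ℝ, 0 < ε → ∀ ℓ : ℕ, 2 ≤ ℓ → ℓ ≤ m - 1 →
      I ℓ ≤ ε * I ℓ + ε * I (ℓ - 1) + Cc ε ℓ * (I 1 + I (ℓ + 1))

lemma le_of_absorb {ε A c w x y z : ℝ} (hA : 0 ≤ A) (hεA : 2 * ε * (1 + A) = 1) (hz : 0 ≤ z)
    (hy : y ≤ A * (w + x)) (hx : x ≤ ε * x + ε * y + c * (w + z)) :
    x ≤ 2 * (ε * A + c) * (w + z) := by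
  have hε : 0 ≤ ε := by nlinarith
  have hεy : ε * y ≤ ε * (A * (w + x)) := mul_le_mul_of_nonneg_left hy hε
  have hhalf : ε * x + ε * (A * (w + x)) = x / 2 + ε * A * w := by
    linear_combination (x / 2) * hεA
  have hεAz : 0 ≤ ε * A * z := by positivity
  linarith

section

variable {m : ℕ} {Cc : ℝ → ℕ → ℝ}

lemma exists_le_mul_first_add_succ
    (hCc : ∀ ε : ℝ, 0 < ε → ∀ ℓ : ℕ, 2 ≤ ℓ → ℓ ≤ m - 1 → 0 < Cc ε ℓ) {ℓ : ℕ} (hℓ : 1 ≤ ℓ) (hℓm : ℓ < m) :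
    ∃ A : ℝ, 0 ≤ A ∧ ∀ I, IsAbsorptionChain m Cc I → I ℓ ≤ A * (I 1 + I (ℓ + 1)) := by
  induction ℓ, hℓ using Nat.le_induction with
  | base => exact ⟨1, zero_le_one, fun I hI => by linarith [hI.1 2 hℓm]⟩
  | succ ℓ hℓ ih =>
    obtain ⟨A, hA, hbound⟩ := ih (by omega)
    obtain ⟨ε, hε, hεA⟩ : ∃ ε : ℝ, 0 < ε ∧ 2 * ε * (1 + A) = 1 :=
      ⟨(2 * (1 + A))⁻¹, by positivity, by field_simp⟩
    refine ⟨2 * (ε * A + Cc ε (ℓ + 1)),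
      by linarith [mul_nonneg hε.le hA, hCc ε hε (ℓ + 1) (by omega) (by omega)], fun I hI => ?_⟩
    have hstep := hI.2 ε hε (ℓ + 1) (by omega) (by omega)
    rw [Nat.add_sub_cancel] at hstep
    exact le_of_absorb hA hεA (hI.1 _ (by omega)) (hbound I hI) hstep

lemma exists_le_mul_first_add_last
    (hCc : ∀ ε : ℝ, 0 < ε → ∀ ℓ : ℕ, 2 ≤ ℓ → ℓ ≤ m - 1 → 0 < Cc ε ℓ) {n : ℕ} (hn : 1 ≤ n)
    (hnm : n ≤ m) :
    ∃ D : ℝ, 1 ≤ D ∧ ∀ I, IsAbsorptionChain m Cc I →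
      ∀ ℓ, n ≤ ℓ → ℓ ≤ m → I ℓ ≤ D * (I 1 + I m) := by
  have hm : 1 ≤ m := hn.trans hnm
  induction hnm using Nat.decreasingInduction with
  | self =>
    refine ⟨1, le_rfl, fun I hI ℓ hmℓ hℓm => ?_⟩
    rw [le_antisymm hℓm hmℓ]
    linarith [hI.1 1 hm]
  | of_succ n hnm ih =>
    obtain ⟨D, hD, hboundD⟩ := ih (by omega)
    obtain ⟨A, hA, hboundA⟩ := exists_le_mul_first_add_succ hCc hn hnm
    refine ⟨D + A * (1 + D), by nlinarith, fun I hI ℓ hnℓ hℓm => ?_⟩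
    have hsum : 0 ≤ I 1 + I m := add_nonneg (hI.1 1 hm) (hI.1 m le_rfl)
    rcases hnℓ.eq_or_lt with rfl | hlt
    · have hnext := hboundD I hI (n + 1) le_rfl hnm
      calc I n ≤ A * (I 1 + I (n + 1)) := hboundA I hI
        _ ≤ A * ((I 1 + I m) + D * (I 1 + I m)) := by
          gcongr
          linarith [hI.1 m le_rfl]
        _ ≤ (D + A * (1 + D)) * (I 1 + I m) := by nlinarith [mul_nonneg (zero_le_one.trans hD) hsum]
    · calc I ℓ ≤ D * (I 1 + I m) := hboundD I hI ℓ hlt hℓm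
        _ ≤ (D + A * (1 + D)) * (I 1 + I m) := by nlinarith [mul_nonneg hA hsum]

end

/-- Iteration/absorption lemma: if nonnegative quantities `I₁, …, I_m` satisfy, for every
`2 ≤ ℓ ≤ m-1` and every `ε > 0`, `I_ℓ ≤ ε I_ℓ + ε I_{ℓ-1} + C(ε,ℓ)(I₁ + I_{ℓ+1})` with
constants `C(ε,ℓ) > 0`, then `I_ℓ ≤ C (I₁ + I_m)` for all `1 ≤ ℓ ≤ m`, with `C` depending
only on `m` and the constants `C(ε,ℓ)`. -/
theorem stmt_12 (m : ℕ) (hm : 2 ≤ m) (Cc : ℝ → ℕ → ℝ)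
    (hCc : ∀ ε : ℝ, 0 < ε → ∀ ℓ : ℕ, 2 ≤ ℓ → ℓ ≤ m - 1 → 0 < Cc ε ℓ) :
    ∃ C : ℝ, 0 < C ∧
      ∀ I : ℕ → ℝ, (∀ ℓ ≤ m, 0 ≤ I ℓ) →
        (∀ ε : ℝ, 0 < ε → ∀ ℓ : ℕ, 2 ≤ ℓ → ℓ ≤ m - 1 →
          I ℓ ≤ ε * I ℓ + ε * I (ℓ - 1) + Cc ε ℓ * (I 1 + I (ℓ + 1))) →
        ∀ ℓ : ℕ, 1 ≤ ℓ → ℓ ≤ m → I ℓ ≤ C * (I 1 + I m) := by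
  obtain ⟨D, hD, hbound⟩ := exists_le_mul_first_add_last hCc le_rfl (show 1 ≤ m by omega)
  exact ⟨D, by linarith, fun I hnonneg hrec ℓ hℓ hℓm => hbound I ⟨hnonneg, hrec⟩ ℓ hℓ hℓm⟩
end

section
/- Let d ≥ 3 and let g ∈ C_c^∞(ℝ^d). Then ∫_{ℝ^d} (1/(1+|x|²)) g(x)² dx ≤ C ( ∫_{ℝ^d} (|x|²/(1+|x|²)) g(x)² dx + ∫_{ℝ^d} (|x|²/(1+|x|²)) |∇g(x)|² dx ) for a constant C depending only on d. -/
open MeasureTheory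

private lemma aux_ineq (t F G y u : ℝ) (hG2 : G ^ 2 ≤ (F * t) ^ 2) (hu0 : 0 < u)
    (hu1 : u ≤ 1) :
    -(u * (2 * y * G) - 2 * t ^ 2 * u ^ 2 * y ^ 2)
      ≤ 2 * (t ^ 2 * u * y ^ 2) + u * y ^ 2 + t ^ 2 * u * F ^ 2 := by
  have husq : u ^ 2 ≤ u := by nlinarith
  have H1 : 0 ≤ u * (y + G) ^ 2 := mul_nonneg hu0.le (sq_nonneg _)
  have H2 : 0 ≤ u * ((F * t) ^ 2 - G ^ 2) := mul_nonneg hu0.le (sub_nonneg.2 hG2)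
  have H3 : 0 ≤ (t ^ 2 * y ^ 2) * (u - u ^ 2) :=
    mul_nonneg (mul_nonneg (sq_nonneg t) (sq_nonneg y)) (sub_nonneg.2 husq)
  nlinarith [H1, H2, H3]

/-- Hardy-type inequality on `ℝ^d`, `d ≥ 3`: for `g ∈ C_c^∞(ℝ^d)`,
`∫ g²/(1+|x|²) ≤ C (∫ |x|²g²/(1+|x|²) + ∫ |x|²|∇g|²/(1+|x|²))` with `C = C(d)`. -/
theorem stmt_13 (d : ℕ) (hd : 3 ≤ d) :
    ∃ C : ℝ, 0 < C ∧
      ∀ g : EuclideanSpace ℝ (Fin d) → ℝ,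
        ContDiff ℝ (⊤ : ℕ∞) g → HasCompactSupport g →
        (∫ x, (1 / (1 + ‖x‖ ^ 2)) * (g x) ^ 2)
          ≤ C * ((∫ x, (‖x‖ ^ 2 / (1 + ‖x‖ ^ 2)) * (g x) ^ 2)
            + ∫ x, (‖x‖ ^ 2 / (1 + ‖x‖ ^ 2)) * ‖fderiv ℝ g x‖ ^ 2) := by
  refine ⟨1, one_pos, fun g hg hgsupp => ?_⟩
  simp only [one_div]
  have hq_pos : ∀ x : EuclideanSpace ℝ (Fin d), (0:ℝ) < 1 + ‖x‖ ^ 2 := fun x => by positivity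
  have hq_ne : ∀ x : EuclideanSpace ℝ (Fin d), (1 + ‖x‖ ^ 2 : ℝ) ≠ 0 := fun x => (hq_pos x).ne'
  set h : EuclideanSpace ℝ (Fin d) → ℝ := fun x => (1 + ‖x‖ ^ 2)⁻¹ * g x ^ 2 with hh_def
  set A : EuclideanSpace ℝ (Fin d) → ℝ := fun x => (‖x‖ ^ 2 / (1 + ‖x‖ ^ 2)) * g x ^ 2 with hA_def
  set B : EuclideanSpace ℝ (Fin d) → ℝ :=
    fun x => (‖x‖ ^ 2 / (1 + ‖x‖ ^ 2)) * ‖fderiv ℝ g x‖ ^ 2 with hB_def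
  have hgd : Differentiable ℝ g := hg.differentiable (by simp)
  -- derivatives
  have hq' : ∀ x : EuclideanSpace ℝ (Fin d),
      HasFDerivAt (fun y : EuclideanSpace ℝ (Fin d) => 1 + ‖y‖ ^ 2) ((2:ℕ) • (innerSL ℝ) x) x :=
    fun x => (hasStrictFDerivAt_norm_sq x).hasFDerivAt.const_add 1
  have hw' : ∀ x : EuclideanSpace ℝ (Fin d),
      HasFDerivAt (fun y : EuclideanSpace ℝ (Fin d) => (1 + ‖y‖ ^ 2)⁻¹)
      ((ContinuousLinearMap.smulRight (1 : ℝ →L[ℝ] ℝ) (-((1 + ‖x‖ ^ 2) ^ 2)⁻¹)).comp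
        ((2:ℕ) • (innerSL ℝ) x)) x :=
    fun x => (hasFDerivAt_inv (hq_ne x)).comp x (hq' x)
  have hg2' : ∀ x : EuclideanSpace ℝ (Fin d), HasFDerivAt (fun y => g y ^ 2)
      (g x • fderiv ℝ g x + g x • fderiv ℝ g x) x := by
    intro x
    have := ((hgd x).hasFDerivAt).mul ((hgd x).hasFDerivAt)
    have e : (fun y => g y ^ 2) = g * g := by funext y; simp [pow_two]
    rw [e]; exact this
  have hh' : ∀ x : EuclideanSpace ℝ (Fin d), HasFDerivAt h
      ((1 + ‖x‖ ^ 2)⁻¹ • (g x • fderiv ℝ g x + g x • fderiv ℝ g x)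
        + (g x ^ 2) • ((ContinuousLinearMap.smulRight (1 : ℝ →L[ℝ] ℝ)
            (-((1 + ‖x‖ ^ 2) ^ 2)⁻¹)).comp ((2:ℕ) • (innerSL ℝ) x))) x :=
    fun x => (hw' x).mul (hg2' x)
  have hhd : Differentiable ℝ h := fun x => (hh' x).differentiableAt
  have hfd : ∀ x : EuclideanSpace ℝ (Fin d), fderiv ℝ h x x =
      (1 + ‖x‖ ^ 2)⁻¹ * (2 * g x * fderiv ℝ g x x)
        - 2 * ‖x‖ ^ 2 * ((1 + ‖x‖ ^ 2) ^ 2)⁻¹ * g x ^ 2 := by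
    intro x
    rw [(hh' x).fderiv]
    have hxx : (innerSL ℝ x) x = ‖x‖ ^ 2 := real_inner_self_eq_norm_sq x
    simp only [ContinuousLinearMap.add_apply, ContinuousLinearMap.smul_apply,
      ContinuousLinearMap.comp_apply, ContinuousLinearMap.smulRight_apply,
      ContinuousLinearMap.one_apply, hxx, smul_eq_mul, nsmul_eq_mul, Nat.cast_ofNat]
    ring
  -- support and integrability
  have hg2supp : HasCompactSupport (fun x : EuclideanSpace ℝ (Fin d) => g x ^ 2) := by
    apply hgsupp.mono
    intro x hx
    simp only [Function.mem_support] at hx ⊢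
    exact fun h0 => hx (by rw [h0]; ring)
  have hhsupp : HasCompactSupport h := hg2supp.mul_left
  have hq1 : ContDiff ℝ 1 (fun x : EuclideanSpace ℝ (Fin d) => 1 + ‖x‖ ^ 2) :=
    contDiff_const.add (contDiff_norm_sq ℝ)
  have hh1 : ContDiff ℝ 1 h := (hq1.inv hq_ne).mul ((hg.of_le (by simp)).pow 2)
  have hfc : Continuous (fderiv ℝ h) := hh1.continuous_fderiv one_ne_zero
  have hhc : Continuous h := hh1.continuous
  have ih : Integrable h := hhc.integrable_of_hasCompactSupport hhsupp
  have hcoordC : ∀ i : Fin d, Continuous (fun y : EuclideanSpace ℝ (Fin d) => y i) := fun i =>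
    (EuclideanSpace.proj (𝕜 := ℝ) i).continuous
  have hfdi : ∀ (i : Fin d) (x : EuclideanSpace ℝ (Fin d)),
      fderiv ℝ (fun y : EuclideanSpace ℝ (Fin d) => y i) x (EuclideanSpace.single i 1) = 1 := by
    intro i x
    rw [show (fun y : EuclideanSpace ℝ (Fin d) => y i) = ⇑(EuclideanSpace.proj (𝕜 := ℝ) i) from rfl,
      ContinuousLinearMap.fderiv]
    simp
  have term2 : ∀ i : Fin d, Integrable (fun x : EuclideanSpace ℝ (Fin d) =>
      x i * fderiv ℝ h x (EuclideanSpace.single i 1)) := by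
    intro i
    apply Continuous.integrable_of_hasCompactSupport
    · exact (hcoordC i).mul (hfc.clm_apply continuous_const)
    · exact (hhsupp.fderiv_apply ℝ (EuclideanSpace.single i 1)).mul_left
  have key : ∀ i : Fin d,
      ∫ x, x i * fderiv ℝ h x (EuclideanSpace.single i 1) = - ∫ x, h x := by
    intro i
    have h1 : Integrable (fun x : EuclideanSpace ℝ (Fin d) =>
        fderiv ℝ (fun y : EuclideanSpace ℝ (Fin d) => y i) x (EuclideanSpace.single i 1) * h x) := by
      simp only [hfdi i, one_mul]; exact ih
    have h3 : Integrable (fun x : EuclideanSpace ℝ (Fin d) => x i * h x) :=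
      ((hcoordC i).mul hhc).integrable_of_hasCompactSupport hhsupp.mul_left
    have hdiff : Differentiable ℝ (fun y : EuclideanSpace ℝ (Fin d) => y i) :=
      (EuclideanSpace.proj (𝕜 := ℝ) i).differentiable
    have := integral_mul_fderiv_eq_neg_fderiv_mul_of_integrable h1 (term2 i) h3 (fun x _ => hdiff x) (fun x _ => hhd x)
    rw [this]
    simp only [hfdi i, one_mul]
  have hsum : ∫ x, fderiv ℝ h x x = - (d : ℝ) * ∫ x, h x := by
    have e1 : ∀ x : EuclideanSpace ℝ (Fin d),
        fderiv ℝ h x x = ∑ i, x i * fderiv ℝ h x (EuclideanSpace.single i 1) := by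
      intro x
      have hx : ∑ i, x i • EuclideanSpace.single i (1:ℝ) = x := by
        ext j
        have := map_sum (EuclideanSpace.proj (𝕜 := ℝ) j)
          (fun i => x i • EuclideanSpace.single i (1:ℝ)) Finset.univ
        rw [show (∑ i, x i • EuclideanSpace.single i (1:ℝ)) j
            = EuclideanSpace.proj (𝕜 := ℝ) j (∑ i, x i • EuclideanSpace.single i (1:ℝ)) from rfl,
          this]
        simp [EuclideanSpace.single_apply]
      have e2 : fderiv ℝ h x (∑ i, x i • EuclideanSpace.single i (1:ℝ))
          = ∑ i, x i * fderiv ℝ h x (EuclideanSpace.single i 1) := by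
        rw [map_sum]
        simp [smul_eq_mul]
      rw [hx] at e2
      exact e2
    calc ∫ x, fderiv ℝ h x x
        = ∑ i, ∫ x, x i * fderiv ℝ h x (EuclideanSpace.single i 1) := by
          simp_rw [e1]; exact integral_finset_sum _ (fun i _ => term2 i)
      _ = - (d:ℝ) * ∫ x, h x := by
          simp only [key, Finset.sum_const, Finset.card_univ, Fintype.card_fin, smul_eq_mul]
          ring
  -- integrability of auxiliary functions
  have hAc : Continuous A := (((continuous_norm.pow 2).div
    (continuous_const.add (continuous_norm.pow 2)) hq_ne).mul ((hg.continuous).pow 2))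
  have hAs : HasCompactSupport A := hg2supp.mul_left
  have iA : Integrable A := hAc.integrable_of_hasCompactSupport hAs
  have hBc : Continuous B := (((continuous_norm.pow 2).div
    (continuous_const.add (continuous_norm.pow 2)) hq_ne).mul
    (((hg.continuous_fderiv (by simp)).norm).pow 2))
  have hBs : HasCompactSupport B := by
    apply HasCompactSupport.mul_left
    apply (hgsupp.fderiv (𝕜 := ℝ)).mono
    intro x hx
    simp only [Function.mem_support] at hx ⊢
    exact fun h0 => hx (by rw [h0]; simp)
  have iB : Integrable B := hBc.integrable_of_hasCompactSupport hBs
  have ilhs : Integrable (fun x : EuclideanSpace ℝ (Fin d) => - fderiv ℝ h x x) := by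
    apply Continuous.integrable_of_hasCompactSupport
    · exact (hfc.clm_apply continuous_id).neg
    · apply (hhsupp.fderiv (𝕜 := ℝ)).mono
      intro x hx
      simp only [Function.mem_support] at hx ⊢
      exact fun h0 => hx (by rw [h0]; simp)
  have irhs : Integrable (fun x : EuclideanSpace ℝ (Fin d) => 2 * A x + h x + B x) :=
    ((iA.const_mul 2).add ih).add iB
  -- pointwise bound
  have hpt : ∀ x : EuclideanSpace ℝ (Fin d), - fderiv ℝ h x x ≤ 2 * A x + h x + B x := by
    intro x
    rw [hfd x]
    simp only [hA_def, hB_def, hh_def]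
    have hG2 : (fderiv ℝ g x x) ^ 2 ≤ (‖fderiv ℝ g x‖ * ‖x‖) ^ 2 := by
      have h1 : |fderiv ℝ g x x| ≤ ‖fderiv ℝ g x‖ * ‖x‖ := by
        rw [show |fderiv ℝ g x x| = ‖fderiv ℝ g x x‖ from (Real.norm_eq_abs _).symm]
        exact (fderiv ℝ g x).le_opNorm x
      nlinarith [abs_nonneg (fderiv ℝ g x x), sq_abs (fderiv ℝ g x x)]
    have hu0 : (0:ℝ) < (1 + ‖x‖ ^ 2)⁻¹ := inv_pos.2 (hq_pos x)
    have hu1 : (1 + ‖x‖ ^ 2)⁻¹ ≤ 1 := by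
      rw [inv_le_one_iff₀]; right; nlinarith [sq_nonneg ‖x‖]
    have key := aux_ineq ‖x‖ ‖fderiv ℝ g x‖ (fderiv ℝ g x x) (g x) (1 + ‖x‖ ^ 2)⁻¹ hG2 hu0 hu1
    rw [show ((1 + ‖x‖ ^ 2) ^ 2)⁻¹ = ((1 + ‖x‖ ^ 2)⁻¹) ^ 2 from (inv_pow _ 2).symm]
    simp only [div_eq_mul_inv]
    linarith [key]
  have hmono : ∫ x, - fderiv ℝ h x x ≤ ∫ x, (2 * A x + h x + B x) :=
    integral_mono ilhs irhs hpt
  have hL : ∫ x, - fderiv ℝ h x x = (d:ℝ) * ∫ x, h x := by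
    rw [integral_neg, hsum]; ring
  have hR : ∫ x, (2 * A x + h x + B x) = 2 * (∫ x, A x) + (∫ x, h x) + ∫ x, B x := by
    have i1 : Integrable (fun x : EuclideanSpace ℝ (Fin d) => 2 * A x + h x) volume :=
      (iA.const_mul 2).add ih
    have i2 : Integrable (fun x : EuclideanSpace ℝ (Fin d) => 2 * A x) volume := iA.const_mul 2
    rw [integral_add i1 iB, integral_add i2 ih, integral_const_mul 2 A]
  have hh0 : 0 ≤ ∫ x, h x := integral_nonneg fun x => by
    simp only [hh_def]; positivity
  have hA0 : 0 ≤ ∫ x, A x := integral_nonneg fun x => by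
    simp only [hA_def]
    have := hq_pos x
    positivity
  have hB0 : 0 ≤ ∫ x, B x := integral_nonneg fun x => by
    simp only [hB_def]
    have := hq_pos x
    positivity
  have hd3 : (3:ℝ) ≤ (d:ℝ) := by exact_mod_cast hd
  rw [hL, hR] at hmono
  nlinarith [mul_nonneg (by linarith : (0:ℝ) ≤ (d:ℝ) - 3) hh0]
end

section
/- Let ρ, f : [0,T) × ℝ^d → ℝ (with f vector-valued) be C¹ solutions of the system ∂ₜρ = -ρ (∇·f) - f·∇ρ, ∂ₜf = -ρ f - c ∇ρ (c : [0,T)×ℝ^d → ℝ a given C¹ function), such that at time 0: ρ(0, 0) = 0, ∇ρ(0, 0) = 0, f(0, 0) = 0, and assume ρ, f are C² in space. Then for all t ∈ [0,T): ρ(t, 0) = 0, ∇ρ(t, 0) = 0, and f(t, 0) = 0. -/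
/-!
Along a characteristic `X' = f(t, X)` the equation `∂ₜρ + ∇ρ·f = -ρ div f` is a linear ODE for
`ρ(t, X t)`. Running characteristics backwards from points `z` near `X t₁` down to time `t₀`,
where `ρ(t₀, y) = O(|y|²)`, and using that the backward flow is Lipschitz, gives
`ρ(t₁, z) = O(|z - X t₁|²)`; hence `ρ` and `∇ρ` vanish along the characteristic `X` issued from
the origin, and this needs no mixed derivative `∂ₜ∇ρ`. There the `f`-equation becomes the
linear ODE `d/dt f(t, X) = D_x f(t, X) f(t, X)`, so `f(t, X t) = 0`, `X` stays at the origin, and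
the degeneracy persists for a short time. A continuous induction covers `[0, T)`.
-/

open Set Metric Filter Topology
open scoped NNReal InnerProductSpace

namespace IsPicardLindelof

variable {E : Type*} [NormedAddCommGroup E] [NormedSpace ℝ E] [CompleteSpace E]
  {f : ℝ → E → E} {tmin tmax : ℝ} {t₀ : Icc tmin tmax} {x₀ : E} {a L K : ℝ≥0}

theorem exists_eq_forall_mem_Icc_mem_closedBall_hasDerivWithinAt
    (hf : IsPicardLindelof f t₀ x₀ a 0 L K) :
    ∃ α : ℝ → E, α t₀ = x₀ ∧ ∀ t ∈ Icc tmin tmax,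
      α t ∈ closedBall x₀ a ∧ HasDerivWithinAt α (f t (α t)) (Icc tmin tmax) t := by
  obtain ⟨α, hα⟩ := ODE.FunSpace.exists_isFixedPt_next hf (mem_closedBall_self le_rfl)
  refine ⟨α.compProj, by rw [ODE.FunSpace.compProj_val, ← hα, ODE.FunSpace.next_apply₀],
    fun t ht ↦ ⟨α.compProj_mem_closedBall hf.mul_max_le, ?_⟩⟩
  apply ODE.hasDerivWithinAt_picard_Icc t₀.2 hf.continuousOn_uncurry
    α.continuous_compProj.continuousOn (fun _ _ ↦ α.compProj_mem_closedBall hf.mul_max_le)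
    x₀ ht |>.congr_of_mem _ ht
  intro t' ht'
  nth_rw 1 [← hα]
  rw [ODE.FunSpace.compProj_of_mem ht', ODE.FunSpace.next_apply]

end IsPicardLindelof

section Trajectories

variable {E : Type*} [NormedAddCommGroup E] [NormedSpace ℝ E]
  {v : ℝ → E → E} {s : ℝ → Set E} {K : ℝ≥0} {f g : ℝ → E} {a b δ : ℝ}

theorem dist_le_of_trajectories_ODE_of_mem_left
    (hv : ∀ t ∈ Ioc a b, LipschitzOnWith K (v t) (s t))
    (hf : ContinuousOn f (Icc a b))
    (hf' : ∀ t ∈ Ioc a b, HasDerivWithinAt f (v t (f t)) (Iic t) t)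
    (hfs : ∀ t ∈ Ioc a b, f t ∈ s t)
    (hg : ContinuousOn g (Icc a b))
    (hg' : ∀ t ∈ Ioc a b, HasDerivWithinAt g (v t (g t)) (Iic t) t)
    (hgs : ∀ t ∈ Ioc a b, g t ∈ s t) (hb : dist (f b) (g b) ≤ δ) :
    ∀ t ∈ Icc a b, dist (f t) (g t) ≤ δ * Real.exp (K * (b - t)) := by
  have hmt1 : MapsTo Neg.neg (Icc (-b) (-a)) (Icc a b) :=
    fun _ ht ↦ ⟨le_neg.mp ht.2, neg_le.mp ht.1⟩
  have hmt2 : MapsTo Neg.neg (Ico (-b) (-a)) (Ioc a b) :=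
    fun _ ht ↦ ⟨lt_neg.mp ht.2, neg_le.mp ht.1⟩
  have hmt3 (t : ℝ) : MapsTo Neg.neg (Ici t) (Iic (-t)) := fun _ ht ↦ mem_Iic.mpr (neg_le_neg ht)
  have reversed (h : ℝ → E) (h' : ∀ t ∈ Ioc a b, HasDerivWithinAt h (v t (h t)) (Iic t) t)
      (t : ℝ) (ht : t ∈ Ico (-b) (-a)) :
      HasDerivWithinAt (h ∘ Neg.neg) (-v (-t) ((h ∘ Neg.neg) t)) (Ici t) t := by
    simpa using (h' (-t) (hmt2 ht)).scomp t (hasDerivAt_neg t).hasDerivWithinAt (hmt3 t)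
  intro t ht
  have := dist_le_of_trajectories_ODE_of_mem (v := fun t x ↦ -v (-t) x) (s := fun t ↦ s (-t))
    (fun t ht ↦ (hv (-t) (hmt2 ht)).neg) (hf.comp continuousOn_neg hmt1) (reversed f hf')
    (fun t ht ↦ hfs (-t) (hmt2 ht)) (hg.comp continuousOn_neg hmt1) (reversed g hg')
    (fun t ht ↦ hgs (-t) (hmt2 ht)) (by simpa using hb) (-t) ⟨neg_le_neg ht.2, neg_le_neg ht.1⟩
  simpa [sub_eq_add_neg, add_comm] using this

end Trajectories

section Partial

variable {𝕜 : Type*} [NontriviallyNormedField 𝕜]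
  {E₁ E₂ G : Type*} [NormedAddCommGroup E₁] [NormedSpace 𝕜 E₁] [NormedAddCommGroup E₂]
  [NormedSpace 𝕜 E₂] [NormedAddCommGroup G] [NormedSpace 𝕜 G]
  {F : E₁ → E₂ → G} {s : Set E₁} {t : E₁} {x : E₂}

theorem HasFDerivWithinAt.hasFDerivAt_right {D : E₁ × E₂ →L[𝕜] G}
    (hF : HasFDerivWithinAt (fun p : E₁ × E₂ ↦ F p.1 p.2) D (s ×ˢ univ) (t, x)) (ht : t ∈ s) :
    HasFDerivAt (F t) (D.comp (.inr 𝕜 E₁ E₂)) x := by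
  have := hF.comp x (hasFDerivAt_prodMk_right t x).hasFDerivWithinAt (s := univ)
    fun y _ ↦ ⟨ht, mem_univ y⟩
  rwa [hasFDerivWithinAt_univ] at this

theorem DifferentiableOn.differentiableAt_right
    (hF : DifferentiableOn 𝕜 (fun p : E₁ × E₂ ↦ F p.1 p.2) (s ×ˢ univ)) (ht : t ∈ s) :
    DifferentiableAt 𝕜 (F t) x :=
  ((hF _ ⟨ht, mem_univ x⟩).hasFDerivWithinAt.hasFDerivAt_right ht).differentiableAt

theorem ContDiffOn.continuousOn_fderiv_right (hs : UniqueDiffOn 𝕜 s)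
    (hF : ContDiffOn 𝕜 1 (fun p : E₁ × E₂ ↦ F p.1 p.2) (s ×ˢ univ)) :
    ContinuousOn (fun p : E₁ × E₂ ↦ fderiv 𝕜 (F p.1) p.2) (s ×ˢ univ) := by
  refine ((hF.continuousOn_fderivWithin (hs.prod uniqueDiffOn_univ) le_rfl).clm_comp
    (continuousOn_const (c := .inr 𝕜 E₁ E₂))).congr fun p hp ↦ ?_
  exact ((hF.differentiableOn one_ne_zero p hp).hasFDerivWithinAt.hasFDerivAt_right hp.1).fderiv

end Partial

section ChainRule

variable {E G : Type*} [NormedAddCommGroup E] [NormedSpace ℝ E] [NormedAddCommGroup G]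
  [NormedSpace ℝ G]

theorem HasDerivWithinAt.comp_partial {F : ℝ → E → G} {I J : Set ℝ} {Y : ℝ → E} {t : ℝ}
    {F' : G} {Y' : E}
    (hF : DifferentiableWithinAt ℝ (fun p : ℝ × E ↦ F p.1 p.2) (I ×ˢ univ) (t, Y t))
    (hI : UniqueDiffWithinAt ℝ I t) (htI : t ∈ I) (hJI : J ⊆ I)
    (ht : HasDerivWithinAt (F · (Y t)) F' I t) (hY : HasDerivWithinAt Y Y' J t) :
    HasDerivWithinAt (fun s ↦ F s (Y s)) (F' + fderiv ℝ (F t) (Y t) Y') J t := by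
  set D := fderivWithin ℝ (fun p : ℝ × E ↦ F p.1 p.2) (I ×ˢ univ) (t, Y t)
  have hD := hF.hasFDerivWithinAt
  have htime : D (1, 0) = F' := by
    have := hD.comp_hasDerivWithinAt t
      ((hasDerivWithinAt_id t I).prodMk (hasDerivWithinAt_const t I (Y t)))
      fun s hs ↦ mk_mem_prod hs (mem_univ (Y t))
    exact hI.eq_deriv _ this ht
  have hspace : fderiv ℝ (F t) (Y t) = D.comp (.inr ℝ ℝ E) := (hD.hasFDerivAt_right htI).fderiv
  have hsplit : D (1, Y') = D (1, 0) + D (0, Y') := by rw [← map_add, Prod.mk_add_mk]; simp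
  refine (hD.comp_hasDerivWithinAt t ((hasDerivWithinAt_id t J).prodMk hY)
    fun s hs ↦ mk_mem_prod (hJI hs) (mem_univ _)).congr_deriv ?_
  rw [hspace, ← htime, ContinuousLinearMap.comp_apply, ContinuousLinearMap.inr_apply]
  exact hsplit

end ChainRule

section Taylor

variable {E F : Type*} [NormedAddCommGroup E] [NormedSpace ℝ E] [NormedAddCommGroup F]
  [NormedSpace ℝ F]

theorem ContDiff.exists_norm_le_mul_sq_of_fderiv_eq_zero {φ : E → F} {x₀ : E}
    (hφ : ContDiff ℝ 2 φ) (h₀ : φ x₀ = 0) (h₁ : fderiv ℝ φ x₀ = 0) :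
    ∃ K : ℝ≥0, ∃ r > 0, ∀ x ∈ closedBall x₀ r, ‖φ x‖ ≤ K * ‖x - x₀‖ ^ 2 := by
  obtain ⟨K, U, hU, hK⟩ :=
    ((hφ.fderiv_right (m := 1) le_rfl).contDiffAt (x := x₀)).exists_lipschitzOnWith
  obtain ⟨r, hr, hrU⟩ := nhds_basis_closedBall.mem_iff.mp hU
  refine ⟨K, r, hr, fun x hx ↦ ?_⟩
  have hsub : closedBall x₀ ‖x - x₀‖ ⊆ U :=
    (closedBall_subset_closedBall (by rwa [← dist_eq_norm])).trans hrU
  have hderiv : ∀ y ∈ closedBall x₀ ‖x - x₀‖, ‖fderiv ℝ φ y‖ ≤ K * ‖x - x₀‖ := fun y hy ↦ by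
    have := hK.dist_le_mul y (hsub hy) x₀ (hsub (mem_closedBall_self (norm_nonneg _)))
    rw [h₁, dist_zero_right] at this
    exact this.trans (by gcongr; exact hy)
  have := (convex_closedBall x₀ _).norm_image_sub_le_of_norm_fderiv_le (x := x₀) (y := x)
    (fun y _ ↦ hφ.differentiable two_ne_zero y) hderiv
    (mem_closedBall_self (norm_nonneg _)) (by simp [dist_eq_norm])
  rwa [h₀, sub_zero, mul_assoc, ← sq] at this

end Taylor

section Transport

variable {E : Type*} [NormedAddCommGroup E] [NormedSpace ℝ E]

/-- For Keller–Segel in the variables `(ρ, f = ∇c)` the damping rate is `a = div f`; the only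
feature of `∂ₜf = -ρf - c∇ρ` that matters is that it vanishes where `ρ` vanishes to first order. -/
structure IsTransportSystem (T : ℝ) (ρ a : ℝ → E → ℝ) (f : ℝ → E → E) : Prop where
  contDiffOn_rho : ContDiffOn ℝ 1 (fun p : ℝ × E ↦ ρ p.1 p.2) (Ico 0 T ×ˢ univ)
  contDiffOn_f : ContDiffOn ℝ 1 (fun p : ℝ × E ↦ f p.1 p.2) (Ico 0 T ×ˢ univ)
  continuousOn_a : ContinuousOn (fun p : ℝ × E ↦ a p.1 p.2) (Ico 0 T ×ˢ univ)
  contDiff_rho : ∀ t ∈ Ico 0 T, ContDiff ℝ 2 (ρ t)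
  hasDerivWithinAt_rho : ∀ x, ∀ t ∈ Ico 0 T,
    HasDerivWithinAt (ρ · x) (-(ρ t x) * a t x - fderiv ℝ (ρ t) x (f t x)) (Ico 0 T) t
  hasDerivWithinAt_f : ∀ x, ∀ t ∈ Ico 0 T, ρ t x = 0 → fderiv ℝ (ρ t) x = 0 →
    HasDerivWithinAt (f · x) 0 (Ico 0 T) t

/-- `δ` is so small that characteristics started in `closedBall 0 (r / 2)` stay in the tube, and
that running them back over time `δ` expands distances by at most `exp (L * δ) ≤ e < 4`. -/
structure TubeBounds (T : ℝ) (f : ℝ → E → E) (a : ℝ → E → ℝ) (t₀ δ r M : ℝ) (C L : ℝ≥0) :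
    Prop where
  Icc_subset : Icc t₀ (t₀ + δ) ⊆ Ico 0 T
  norm_le : ∀ t ∈ Icc t₀ (t₀ + δ), ∀ x ∈ closedBall (0 : E) r, ‖f t x‖ ≤ C
  norm_fderiv_le : ∀ t ∈ Icc t₀ (t₀ + δ), ∀ x ∈ closedBall (0 : E) r, ‖fderiv ℝ (f t) x‖ ≤ L
  lipschitzOnWith : ∀ t ∈ Icc t₀ (t₀ + δ), LipschitzOnWith L (f t) (closedBall 0 r)
  abs_le : ∀ t ∈ Icc t₀ (t₀ + δ), ∀ x ∈ closedBall (0 : E) r, |a t x| ≤ M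
  mul_le : C * δ ≤ r / 4
  lipschitz_mul_le : L * δ ≤ 1

variable {T t₀ t₁ δ r M : ℝ} {C L K : ℝ≥0} {ρ a : ℝ → E → ℝ} {f : ℝ → E → E}

theorem TubeBounds.exists_characteristic [CompleteSpace E] (hb : TubeBounds T f a t₀ δ r M C L)
    (hf : ContinuousOn (fun p : ℝ × E ↦ f p.1 p.2) (Ico 0 T ×ˢ univ)) {τ : ℝ}
    (ht₁ : t₁ ∈ Icc t₀ (t₀ + δ)) (hτ : τ ∈ Icc t₀ t₁) {z : E}
    (hz : closedBall z (r / 4) ⊆ closedBall 0 r) :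
    ∃ Y : ℝ → E, Y τ = z ∧ ∀ t ∈ Icc t₀ t₁,
      Y t ∈ closedBall z (r / 4) ∧ HasDerivWithinAt Y (f t (Y t)) (Icc t₀ t₁) t := by
  have hsub : Icc t₀ t₁ ⊆ Icc t₀ (t₀ + δ) := Icc_subset_Icc_right ht₁.2
  have hCδ : C * max (t₁ - τ) (τ - t₀) ≤ r / 4 :=
    le_trans (by gcongr; exact max_le (by linarith [hτ.1, ht₁.2]) (by linarith [hτ.2, ht₁.2]))
      hb.mul_le
  lift r / 4 to ℝ≥0 using (mul_nonneg C.2 (le_max_of_le_left (by linarith [hτ.2]))).trans hCδ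
    with ε hε
  have hpl : IsPicardLindelof f (⟨τ, hτ⟩ : Icc t₀ t₁) z ε 0 C L :=
    { lipschitzOnWith := fun t ht ↦ (hb.lipschitzOnWith t (hsub ht)).mono hz
      continuousOn := fun x _ ↦ hf.comp (continuous_id.prodMk continuous_const).continuousOn
        fun t ht ↦ mk_mem_prod (hb.Icc_subset (hsub ht)) (mem_univ x)
      norm_le := fun t ht x hx ↦ hb.norm_le t (hsub ht) x (hz hx)
      mul_max_le := by simpa using hCδ }
  exact hpl.exists_eq_forall_mem_Icc_mem_closedBall_hasDerivWithinAt

theorem TubeBounds.dist_le_four_mul_of_characteristics (hb : TubeBounds T f a t₀ δ r M C L)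
    (ht₁ : t₁ ∈ Icc t₀ (t₀ + δ)) {X Y : ℝ → E}
    (hX : ∀ t ∈ Icc t₀ t₁, X t ∈ closedBall 0 r ∧ HasDerivWithinAt X (f t (X t)) (Icc t₀ t₁) t)
    (hY : ∀ t ∈ Icc t₀ t₁, Y t ∈ closedBall 0 r ∧ HasDerivWithinAt Y (f t (Y t)) (Icc t₀ t₁) t) :
    dist (X t₀) (Y t₀) ≤ 4 * dist (X t₁) (Y t₁) := by
  have hderiv {Z : ℝ → E} (hZ : ∀ t ∈ Icc t₀ t₁, Z t ∈ closedBall 0 r ∧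
      HasDerivWithinAt Z (f t (Z t)) (Icc t₀ t₁) t) (t : ℝ) (ht : t ∈ Ioc t₀ t₁) :
      HasDerivWithinAt Z (f t (Z t)) (Iic t) t :=
    (hZ t (Ioc_subset_Icc_self ht)).2.mono_of_mem_nhdsWithin (Icc_mem_nhdsLE_of_mem ht)
  have hexp : Real.exp (L * (t₁ - t₀)) ≤ 4 := by
    have : L * (t₁ - t₀) ≤ 1 := le_trans (by gcongr; linarith [ht₁.2]) hb.lipschitz_mul_le
    linarith [Real.exp_le_exp.2 this, Real.exp_one_lt_d9]
  have := dist_le_of_trajectories_ODE_of_mem_left (s := fun _ ↦ closedBall 0 r)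
    (fun t ht ↦ hb.lipschitzOnWith t ⟨ht.1.le, ht.2.trans ht₁.2⟩)
    (fun t ht ↦ (hX t ht).2.continuousWithinAt) (hderiv hX)
    (fun t ht ↦ (hX t (Ioc_subset_Icc_self ht)).1)
    (fun t ht ↦ (hY t ht).2.continuousWithinAt) (hderiv hY)
    (fun t ht ↦ (hY t (Ioc_subset_Icc_self ht)).1) le_rfl t₀ (left_mem_Icc.2 ht₁.1)
  nlinarith [dist_nonneg (x := X t₁) (y := Y t₁)]

namespace IsTransportSystem

theorem exists_tubeBounds [ProperSpace E] (h : IsTransportSystem T ρ a f) (ht₀ : t₀ ∈ Ico 0 T)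
    (hr : 0 < r) : ∃ δ > 0, ∃ M : ℝ, ∃ C L : ℝ≥0, TubeBounds T f a t₀ δ r M C L := by
  obtain ⟨t₂, ht₀₂, ht₂T⟩ := exists_between ht₀.2
  have hQ : Icc t₀ t₂ ×ˢ closedBall (0 : E) r ⊆ Ico 0 T ×ˢ univ := fun p hp ↦
    ⟨⟨ht₀.1.trans hp.1.1, hp.1.2.trans_lt ht₂T⟩, mem_univ _⟩
  have hQc : IsCompact (Icc t₀ t₂ ×ˢ closedBall (0 : E) r) :=
    isCompact_Icc.prod (isCompact_closedBall 0 r)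
  obtain ⟨C, hC⟩ := hQc.exists_bound_of_continuousOn (h.contDiffOn_f.continuousOn.mono hQ)
  obtain ⟨L, hL⟩ := hQc.exists_bound_of_continuousOn
    ((h.contDiffOn_f.continuousOn_fderiv_right (uniqueDiffOn_Ico 0 T)).mono hQ)
  obtain ⟨M, hM⟩ := hQc.exists_bound_of_continuousOn (h.continuousOn_a.mono hQ)
  have hsmall : ∀ᶠ δ in 𝓝 (0 : ℝ), t₀ + δ < t₂ ∧ C.toNNReal * δ < r / 4 ∧ L.toNNReal * δ < 1 := by
    refine (ContinuousAt.eventually_lt ?_ ?_ ?_).and ((ContinuousAt.eventually_lt ?_ ?_ ?_).and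
      (ContinuousAt.eventually_lt ?_ ?_ ?_)) <;> first | fun_prop | simp [ht₀₂, hr]
  obtain ⟨δ, ⟨hδt₂, hCδ, hLδ⟩, hδ⟩ :=
    ((hsmall.filter_mono nhdsWithin_le_nhds).and (self_mem_nhdsWithin (s := Ioi (0 : ℝ)))).exists
  have hsub : Icc t₀ (t₀ + δ) ⊆ Icc t₀ t₂ := Icc_subset_Icc_right hδt₂.le
  have hI : Icc t₀ (t₀ + δ) ⊆ Ico 0 T := fun t ht ↦
    (hQ (mk_mem_prod (hsub ht) (mem_closedBall_self hr.le))).1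
  have hfderiv : ∀ t ∈ Icc t₀ (t₀ + δ), ∀ x ∈ closedBall (0 : E) r,
      ‖fderiv ℝ (f t) x‖ ≤ L.toNNReal := fun t ht x hx ↦
    (hL (t, x) ⟨hsub ht, hx⟩).trans (Real.le_coe_toNNReal L)
  refine ⟨δ, hδ, M, C.toNNReal, L.toNNReal, ⟨hI, fun t ht x hx ↦ ?_, hfderiv, fun t ht ↦ ?_,
    fun t ht x hx ↦ hM (t, x) ⟨hsub ht, hx⟩, hCδ.le, hLδ.le⟩⟩
  · exact (hC (t, x) ⟨hsub ht, hx⟩).trans (Real.le_coe_toNNReal C)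
  · refine (convex_closedBall 0 r).lipschitzOnWith_of_nnnorm_fderiv_le (𝕜 := ℝ) (fun x _ ↦ ?_)
      fun x hx ↦ by rw [← NNReal.coe_le_coe, coe_nnnorm]; exact hfderiv t ht x hx
    exact (h.contDiffOn_f.differentiableOn one_ne_zero).differentiableAt_right (hI ht)

theorem hasDerivWithinAt_rho_comp (h : IsTransportSystem T ρ a f) {J : Set ℝ} {Y : ℝ → E}
    {t : ℝ} (hJ : J ⊆ Ico 0 T) (ht : t ∈ J) (hY : HasDerivWithinAt Y (f t (Y t)) J t) :
    HasDerivWithinAt (fun s ↦ ρ s (Y s)) (-(ρ t (Y t)) * a t (Y t)) J t := by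
  simpa using HasDerivWithinAt.comp_partial
    (h.contDiffOn_rho.differentiableOn one_ne_zero _ (mk_mem_prod (hJ ht) (mem_univ _)))
    (uniqueDiffOn_Ico 0 T t (hJ ht)) (hJ ht) hJ (h.hasDerivWithinAt_rho (Y t) t (hJ ht)) hY

theorem hasDerivWithinAt_f_comp (h : IsTransportSystem T ρ a f) {J : Set ℝ} {Y : ℝ → E}
    {t : ℝ} (hJ : J ⊆ Ico 0 T) (ht : t ∈ J) (hY : HasDerivWithinAt Y (f t (Y t)) J t)
    (hρ : ρ t (Y t) = 0) (hDρ : fderiv ℝ (ρ t) (Y t) = 0) :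
    HasDerivWithinAt (fun s ↦ f s (Y s)) (fderiv ℝ (f t) (Y t) (f t (Y t))) J t := by
  simpa using HasDerivWithinAt.comp_partial
    (h.contDiffOn_f.differentiableOn one_ne_zero _ (mk_mem_prod (hJ ht) (mem_univ _)))
    (uniqueDiffOn_Ico 0 T t (hJ ht)) (hJ ht) hJ (h.hasDerivWithinAt_f (Y t) t (hJ ht) hρ hDρ) hY

theorem abs_le_mul_exp_of_characteristic (h : IsTransportSystem T ρ a f)
    (hb : TubeBounds T f a t₀ δ r M C L) (ht₁ : t₁ ∈ Icc t₀ (t₀ + δ)) {Y : ℝ → E}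
    (hY : ∀ t ∈ Icc t₀ t₁, Y t ∈ closedBall 0 r ∧
      HasDerivWithinAt Y (f t (Y t)) (Icc t₀ t₁) t) :
    |ρ t₁ (Y t₁)| ≤ |ρ t₀ (Y t₀)| * Real.exp (M * (t₁ - t₀)) := by
  have hsub : Icc t₀ t₁ ⊆ Icc t₀ (t₀ + δ) := Icc_subset_Icc_right ht₁.2
  have hderiv (t) (ht : t ∈ Icc t₀ t₁) := h.hasDerivWithinAt_rho_comp
    (hsub.trans hb.Icc_subset) ht (hY t ht).2
  have := norm_le_gronwallBound_of_norm_deriv_right_le (K := M) (ε := 0)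
    (fun t ht ↦ (hderiv t ht).continuousWithinAt)
    (fun t ht ↦ (hderiv t (Ico_subset_Icc_self ht)).mono_of_mem_nhdsWithin
      (Icc_mem_nhdsGE_of_mem ht)) le_rfl
    (fun t ht ↦ ?_) t₁ (right_mem_Icc.2 ht₁.1)
  · rwa [gronwallBound_ε0] at this
  · have := hb.abs_le t (hsub (Ico_subset_Icc_self ht)) _ (hY t (Ico_subset_Icc_self ht)).1
    rw [norm_mul, norm_neg, add_zero, mul_comm, Real.norm_eq_abs (a _ _)]
    gcongr

theorem abs_le_mul_sq_of_characteristic [CompleteSpace E] (h : IsTransportSystem T ρ a f)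
    (hb : TubeBounds T f a t₀ δ r M C L) (hK : ∀ y ∈ closedBall (0 : E) r, ‖ρ t₀ y‖ ≤ K * ‖y‖ ^ 2)
    (ht₁ : t₁ ∈ Icc t₀ (t₀ + δ)) {X : ℝ → E} (hX₀ : X t₀ = 0)
    (hX : ∀ t ∈ Icc t₀ t₁, X t ∈ closedBall 0 (r / 4) ∧
      HasDerivWithinAt X (f t (X t)) (Icc t₀ t₁) t) :
    ∀ z ∈ closedBall (X t₁) (r / 4),
      |ρ t₁ z| ≤ 16 * K * Real.exp (M * (t₁ - t₀)) * ‖z - X t₁‖ ^ 2 := by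
  intro z hz
  have hXt₁ := (hX t₁ (right_mem_Icc.2 ht₁.1)).1
  rw [mem_closedBall] at hz hXt₁
  have hr : 0 ≤ r := by linarith [dist_nonneg (x := z) (y := X t₁)]
  have hzr : closedBall z (r / 4) ⊆ closedBall 0 r := fun y hy ↦ by
    rw [mem_closedBall] at hy ⊢
    linarith [dist_triangle4 y z (X t₁) 0]
  obtain ⟨Y, hYz, hY⟩ :=
    hb.exists_characteristic h.contDiffOn_f.continuousOn ht₁ (right_mem_Icc.2 ht₁.1) hzr
  have hYr (t) (ht : t ∈ Icc t₀ t₁) : Y t ∈ closedBall 0 r := hzr (hY t ht).1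
  have hXr (t) (ht : t ∈ Icc t₀ t₁) : X t ∈ closedBall 0 r :=
    closedBall_subset_closedBall (by linarith) (hX t ht).1
  have hback : ‖Y t₀‖ ≤ 4 * ‖z - X t₁‖ := by
    simpa [hX₀, hYz, dist_eq_norm] using hb.dist_le_four_mul_of_characteristics ht₁
      (fun t ht ↦ ⟨hYr t ht, (hY t ht).2⟩) fun t ht ↦ ⟨hXr t ht, (hX t ht).2⟩
  have hY₀ : Y t₀ ∈ closedBall 0 r := by
    rw [mem_closedBall, dist_zero_right]
    linarith [dist_eq_norm z (X t₁)]
  calc |ρ t₁ z| = |ρ t₁ (Y t₁)| := by rw [hYz]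
    _ ≤ |ρ t₀ (Y t₀)| * Real.exp (M * (t₁ - t₀)) :=
      h.abs_le_mul_exp_of_characteristic hb ht₁ fun t ht ↦ ⟨hYr t ht, (hY t ht).2⟩
    _ ≤ K * ‖Y t₀‖ ^ 2 * Real.exp (M * (t₁ - t₀)) := by
      gcongr
      simpa using hK _ hY₀
    _ ≤ K * (4 * ‖z - X t₁‖) ^ 2 * Real.exp (M * (t₁ - t₀)) := by gcongr
    _ = 16 * K * Real.exp (M * (t₁ - t₀)) * ‖z - X t₁‖ ^ 2 := by ring

theorem exists_pos_forall_mem_Icc_degenerate [ProperSpace E] (h : IsTransportSystem T ρ a f)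
    (ht₀ : t₀ ∈ Ico 0 T)
    (hρ : ρ t₀ 0 = 0) (hDρ : fderiv ℝ (ρ t₀) 0 = 0) (hf : f t₀ 0 = 0) :
    ∃ δ > 0, ∀ t ∈ Icc t₀ (t₀ + δ), ρ t 0 = 0 ∧ fderiv ℝ (ρ t) 0 = 0 ∧ f t 0 = 0 := by
  obtain ⟨K, r, hr, hK⟩ := (h.contDiff_rho t₀ ht₀).exists_norm_le_mul_sq_of_fderiv_eq_zero hρ hDρ
  obtain ⟨δ, hδ, M, C, L, hb⟩ := h.exists_tubeBounds ht₀ hr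
  obtain ⟨X, hX₀, hX⟩ := hb.exists_characteristic (z := 0) h.contDiffOn_f.continuousOn
    (right_mem_Icc.2 (by linarith)) (left_mem_Icc.2 (by linarith))
    (closedBall_subset_closedBall (by linarith))
  have hflat (t) (ht : t ∈ Icc t₀ (t₀ + δ)) : ρ t (X t) = 0 ∧ fderiv ℝ (ρ t) (X t) = 0 := by
    have hsub : Icc t₀ t ⊆ Icc t₀ (t₀ + δ) := Icc_subset_Icc_right ht.2
    have hO : ρ t =O[𝓝 (X t)] fun z ↦ ‖z - X t‖ ^ 2 := by
      refine .of_bound (16 * K * Real.exp (M * (t - t₀))) ?_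
      filter_upwards [closedBall_mem_nhds (X t) (by positivity : 0 < r / 4)] with z hz
      simpa using h.abs_le_mul_sq_of_characteristic hb (by simpa using hK) ht hX₀
        (fun s hs ↦ ⟨(hX s (hsub hs)).1, (hX s (hsub hs)).2.mono hsub⟩) z hz
    exact ⟨hO.eq_zero_of_norm_pow two_ne_zero, (hO.hasFDerivAt one_lt_two).fderiv⟩
  have hV (t) (ht : t ∈ Icc t₀ (t₀ + δ)) := h.hasDerivWithinAt_f_comp hb.Icc_subset ht (hX t ht).2
    (hflat t ht).1 (hflat t ht).2
  have hfX : ∀ t ∈ Icc t₀ (t₀ + δ), f t (X t) = 0 :=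
    eq_zero_of_abs_deriv_le_mul_abs_self_of_eq_zero_right (K := L)
      (fun t ht ↦ (hV t ht).continuousWithinAt)
      (fun t ht ↦ (hV t (Ico_subset_Icc_self ht)).mono_of_mem_nhdsWithin
        (Icc_mem_nhdsGE_of_mem ht)) (by rw [hX₀, hf]) fun t ht ↦
      (fderiv ℝ (f t) (X t)).le_of_opNorm_le (hb.norm_fderiv_le t (Ico_subset_Icc_self ht) _
        (closedBall_subset_closedBall (by linarith) (hX t (Ico_subset_Icc_self ht)).1)) _
  have hX0 : ∀ t ∈ Icc t₀ (t₀ + δ), X t = 0 :=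
    eq_zero_of_abs_deriv_le_mul_abs_self_of_eq_zero_right (K := 0)
      (fun t ht ↦ (hX t ht).2.continuousWithinAt)
      (fun t ht ↦ (hX t (Ico_subset_Icc_self ht)).2.mono_of_mem_nhdsWithin
        (Icc_mem_nhdsGE_of_mem ht)) hX₀ fun t ht ↦ by simp [hfX t (Ico_subset_Icc_self ht)]
  refine ⟨δ, hδ, fun t ht ↦ ?_⟩
  simpa only [hX0 t ht] using And.intro (hflat t ht).1 (And.intro (hflat t ht).2 (hfX t ht))

theorem forall_mem_Ico_degenerate [ProperSpace E] (h : IsTransportSystem T ρ a f) (hρ : ρ 0 0 = 0)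
    (hDρ : fderiv ℝ (ρ 0) 0 = 0) (hf : f 0 0 = 0) :
    ∀ t ∈ Ico 0 T, ρ t 0 = 0 ∧ fderiv ℝ (ρ t) 0 = 0 ∧ f t 0 = 0 := by
  intro t ht
  set s := {u : ℝ | ρ u 0 = 0 ∧ fderiv ℝ (ρ u) 0 = 0 ∧ f u 0 = 0}
  have hI : Icc 0 t ⊆ Ico 0 T := Icc_subset_Ico_right ht.2
  have hmem : MapsTo (fun u : ℝ ↦ (u, (0 : E))) (Icc 0 t) (Ico 0 T ×ˢ univ) :=
    fun u hu ↦ mk_mem_prod (hI hu) (mem_univ _)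
  have hpath : ContinuousOn (fun u : ℝ ↦ (u, (0 : E))) (Icc 0 t) := by fun_prop
  have hcont : ContinuousOn (fun u ↦ (ρ u 0, fderiv ℝ (ρ u) 0, f u 0)) (Icc 0 t) :=
    (h.contDiffOn_rho.continuousOn.comp hpath hmem).prodMk
      (((h.contDiffOn_rho.continuousOn_fderiv_right (uniqueDiffOn_Ico 0 T)).comp hpath hmem).prodMk
        (h.contDiffOn_f.continuousOn.comp hpath hmem))
  have hclosed : IsClosed (s ∩ Icc 0 t) := by
    convert hcont.preimage_isClosed_of_isClosed isClosed_Icc (isClosed_singleton (x := 0))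
      using 1
    ext u
    simp [s, Prod.ext_iff, and_comm]
  refine hclosed.Icc_subset_of_forall_mem_nhdsWithin ⟨hρ, hDρ, hf⟩ (fun u hu ↦ ?_)
    (right_mem_Icc.2 ht.1)
  obtain ⟨δ, hδ, hloc⟩ := h.exists_pos_forall_mem_Icc_degenerate
    (Ico_subset_Ico_right ht.2.le hu.2) hu.1.1 hu.1.2.1 hu.1.2.2
  exact mem_of_superset (Ioc_mem_nhdsGT (by linarith)) fun v hv ↦ hloc v (Ioc_subset_Icc_self hv)

end IsTransportSystem

end Transport

theorem ContDiffOn.continuousOn_sum_fderiv_inner_apply {E : Type*} [NormedAddCommGroup E]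
    [InnerProductSpace ℝ E] {ι : Type*} [Fintype ι] {F : ℝ → E → E} {s : Set ℝ}
    (hs : UniqueDiffOn ℝ s) (hF : ContDiffOn ℝ 1 (fun p : ℝ × E ↦ F p.1 p.2) (s ×ˢ univ))
    (e : ι → E) :
    ContinuousOn (fun p : ℝ × E ↦ ∑ i, fderiv ℝ (fun y ↦ ⟪F p.1 y, e i⟫_ℝ) p.2 (e i))
      (s ×ˢ univ) := by
  have hterm (i : ι) : ContinuousOn (fun p : ℝ × E ↦ ⟪fderiv ℝ (F p.1) p.2 (e i), e i⟫_ℝ)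
      (s ×ˢ univ) :=
    ((hF.continuousOn_fderiv_right hs).clm_apply continuousOn_const).inner continuousOn_const
  refine (continuousOn_finsetSum _ fun i _ ↦ hterm i).congr fun p hp ↦
    Finset.sum_congr rfl fun i _ ↦ ?_
  rw [fderiv_inner_apply ℝ ((hF.differentiableOn one_ne_zero).differentiableAt_right hp.1)
    (differentiableAt_const _)]
  simp

theorem stmt_14_general (d : ℕ) (T : ℝ)
    (ρ c : ℝ → EuclideanSpace ℝ (Fin d) → ℝ)
    (f : ℝ → EuclideanSpace ℝ (Fin d) → EuclideanSpace ℝ (Fin d))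
    (hρC1 : ContDiffOn ℝ 1 (fun p : ℝ × EuclideanSpace ℝ (Fin d) => ρ p.1 p.2)
      (Ico (0:ℝ) T ×ˢ univ))
    (hfC1 : ContDiffOn ℝ 1 (fun p : ℝ × EuclideanSpace ℝ (Fin d) => f p.1 p.2)
      (Ico (0:ℝ) T ×ˢ univ))
    (hρC2 : ∀ t ∈ Ico (0:ℝ) T, ContDiff ℝ 2 (ρ t))
    (hρeq : ∀ x, ∀ t ∈ Ico (0:ℝ) T,
      HasDerivWithinAt (fun s => ρ s x)
        (-(ρ t x) * (∑ i, fderiv ℝ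
            (fun y => (inner ℝ (f t y) (EuclideanSpace.single i 1) : ℝ)) x
            (EuclideanSpace.single i 1))
          - (inner ℝ (f t x) (gradient (ρ t) x) : ℝ)) (Ico 0 T) t)
    (hfeq : ∀ x, ∀ t ∈ Ico (0:ℝ) T,
      HasDerivWithinAt (fun s => f s x)
        (-(ρ t x) • f t x - c t x • gradient (ρ t) x) (Ico 0 T) t)
    (h0ρ : ρ 0 0 = 0) (h0gradρ : gradient (ρ 0) 0 = 0) (h0f : f 0 0 = 0) :
    ∀ t ∈ Ico (0:ℝ) T, ρ t 0 = 0 ∧ gradient (ρ t) 0 = 0 ∧ f t 0 = 0 := by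
  have hgrad (t : ℝ) (x) : gradient (ρ t) x = 0 ↔ fderiv ℝ (ρ t) x = 0 := by
    rw [← toDual_gradient, LinearIsometryEquiv.map_eq_zero_iff]
  have hsys : IsTransportSystem T ρ
      (fun t x ↦ ∑ i, fderiv ℝ (fun y ↦ inner ℝ (f t y) (EuclideanSpace.single i 1)) x
        (EuclideanSpace.single i 1)) f :=
    { contDiffOn_rho := hρC1
      contDiffOn_f := hfC1
      continuousOn_a := hfC1.continuousOn_sum_fderiv_inner_apply (uniqueDiffOn_Ico 0 T) _
      contDiff_rho := hρC2
      hasDerivWithinAt_rho := fun x t ht ↦ by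
        rw [← inner_gradient_left, real_inner_comm]
        exact hρeq x t ht
      hasDerivWithinAt_f := fun x t ht hρ hDρ ↦ by
        simpa [hρ, (hgrad t x).2 hDρ] using hfeq x t ht }
  intro t ht
  obtain ⟨hρt, hDρt, hft⟩ := hsys.forall_mem_Ico_degenerate h0ρ ((hgrad 0 0).1 h0gradρ) h0f t ht
  exact ⟨hρt, (hgrad t 0).2 hDρt, hft⟩

/-- Propagation of degeneracy for the inviscid Keller–Segel system in the variables
`(ρ, f = ∇c)`: if `∂ₜρ = -ρ(∇·f) - f·∇ρ` and `∂ₜf = -ρf - c∇ρ` on `[0,T) × ℝ^d`, with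
`ρ(0,0) = 0`, `∇ρ(0,0) = 0`, `f(0,0) = 0`, then `ρ(t,0) = 0`, `∇ρ(t,0) = 0`, `f(t,0) = 0`
for all `t ∈ [0,T)`. -/
theorem stmt_14 (d : ℕ) (hd : 1 ≤ d) (T : ℝ) (hT : 0 < T)
    (ρ c : ℝ → EuclideanSpace ℝ (Fin d) → ℝ)
    (f : ℝ → EuclideanSpace ℝ (Fin d) → EuclideanSpace ℝ (Fin d))
    (hρC1 : ContDiffOn ℝ 1 (fun p : ℝ × EuclideanSpace ℝ (Fin d) => ρ p.1 p.2)
      (Ico (0:ℝ) T ×ˢ univ))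
    (hcC1 : ContDiffOn ℝ 1 (fun p : ℝ × EuclideanSpace ℝ (Fin d) => c p.1 p.2)
      (Ico (0:ℝ) T ×ˢ univ))
    (hfC1 : ContDiffOn ℝ 1 (fun p : ℝ × EuclideanSpace ℝ (Fin d) => f p.1 p.2)
      (Ico (0:ℝ) T ×ˢ univ))
    (hρC2 : ∀ t ∈ Ico (0:ℝ) T, ContDiff ℝ 2 (ρ t))
    (hfC2 : ∀ t ∈ Ico (0:ℝ) T, ContDiff ℝ 2 (f t))
    (hρeq : ∀ x, ∀ t ∈ Ico (0:ℝ) T,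
      HasDerivWithinAt (fun s => ρ s x)
        (-(ρ t x) * (∑ i, fderiv ℝ
            (fun y => (inner ℝ (f t y) (EuclideanSpace.single i 1) : ℝ)) x
            (EuclideanSpace.single i 1))
          - (inner ℝ (f t x) (gradient (ρ t) x) : ℝ)) (Ico 0 T) t)
    (hfeq : ∀ x, ∀ t ∈ Ico (0:ℝ) T,
      HasDerivWithinAt (fun s => f s x)
        (-(ρ t x) • f t x - c t x • gradient (ρ t) x) (Ico 0 T) t)
    (h0ρ : ρ 0 0 = 0) (h0gradρ : gradient (ρ 0) 0 = 0) (h0f : f 0 0 = 0) :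
    ∀ t ∈ Ico (0:ℝ) T, ρ t 0 = 0 ∧ gradient (ρ t) 0 = 0 ∧ f t 0 = 0 :=
  stmt_14_general d T ρ c f hρC1 hfC1 hρC2 hρeq hfeq h0ρ h0gradρ h0f
end

section
/- Let C : [0,∞) → ℝ be continuous and let Y, Z : [0,T) → ℝ solve Ẏ = -(1/2) X Y - C(t) Z, Ż = X Y + (1/2) X Z - C(t) Y, Ẋ = βY - γZ, where β < 0 and γ ≤ 0 are constants. If X(0) < 0, Z(0) < 0 < Y(0), and C(t) ≡ 0, then the signs X(t) < 0, Z(t) < 0 < Y(t) persist as long as the solution exists, and the solution blows up in finite time. -/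
/-!
Sign persistence is a continuous induction. While `X < 0`, `Z < 0 < Y` on `[0, t)`, the
equations `Ẏ = -XY/2`, `Ẋ = βY - γZ` and `(YZ)' = XY²` make `Y` nondecreasing and `X`, `YZ`
nonincreasing on `[0, t]`, so the signs still hold at `t`; being strict inequalities they then
hold a bit longer.

For blow-up put `u = -X > 0` and `v = Y`, so that `v' = uv/2` and `u' ≥ -βv`. For `c ≤ -4β`
the quantity `u² - cv` is nondecreasing; choosing also `c ≤ 1` and `c v(0) ≤ u(0)²` gives
`u ≥ c√v`, hence `(1/√v)' = -u/(4√v) ≤ -c/4`. As `1/√v` stays positive, the solution cannot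
live past `4 / (c √v(0))`.
-/

open Set Filter Topology

theorem le_of_hasDerivAt_nonneg {f f' : ℝ → ℝ} {a b : ℝ} (hab : a ≤ b)
    (hf : ∀ x ∈ Icc a b, HasDerivAt f (f' x) x) (hf' : ∀ x ∈ Ioo a b, 0 ≤ f' x) :
    f a ≤ f b :=
  monotoneOn_of_hasDerivWithinAt_nonneg (convex_Icc a b)
    (fun x hx ↦ (hf x hx).continuousAt.continuousWithinAt)
    (fun x hx ↦ by
      rw [interior_Icc] at hx ⊢
      exact (hf x (Ioo_subset_Icc_self hx)).hasDerivWithinAt)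
    (by rwa [interior_Icc]) (left_mem_Icc.2 hab) (right_mem_Icc.2 hab) hab

theorem le_of_hasDerivAt_nonpos {f f' : ℝ → ℝ} {a b : ℝ} (hab : a ≤ b)
    (hf : ∀ x ∈ Icc a b, HasDerivAt f (f' x) x) (hf' : ∀ x ∈ Ioo a b, f' x ≤ 0) :
    f b ≤ f a :=
  neg_le_neg_iff.1 <| le_of_hasDerivAt_nonneg (f := -f) hab (fun x hx ↦ (hf x hx).neg)
    fun x hx ↦ neg_nonneg.2 (hf' x hx)

theorem lt_of_hasDerivAt_le_neg {f f' : ℝ → ℝ} {a b κ : ℝ} (hab : a ≤ b)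
    (hf : ∀ x ∈ Icc a b, HasDerivAt f (f' x) x) (hf' : ∀ x ∈ Ioo a b, f' x ≤ -κ)
    (hfb : 0 < f b) : κ * (b - a) < f a := by
  have := le_of_hasDerivAt_nonpos (f := fun x ↦ f x + κ * x) hab
    (fun x hx ↦ (hf x hx).add ((hasDerivAt_id x).const_mul κ))
    fun x hx ↦ by linarith [hf' x hx]
  linarith

theorem Ico_subset_of_forall_mem_nhdsGT {s : Set ℝ} {a b : ℝ}
    (hstep : ∀ t ∈ Ico a b, Ico a t ⊆ s → t ∈ s) (hopen : ∀ t ∈ s ∩ Ico a b, s ∈ 𝓝[>] t) :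
    Ico a b ⊆ s := by
  intro t ht
  set A := {x | Ico a x ⊆ s}
  have hA : IsClosed A := by
    have : A = ⋂ u ∈ Ici a \ s, Iic u := by
      ext x
      simp only [A, mem_ofPred_eq, subset_def, mem_Ico, mem_iInter, Set.mem_sdiff, mem_Ici,
        mem_Iic]
      constructor
      · intro h u ⟨hau, hu⟩
        by_contra! hxu
        exact hu (h u ⟨hau, hxu⟩)
      · intro h u ⟨hau, hux⟩
        by_contra hu
        exact (h u ⟨hau, hu⟩).not_gt hux
    rw [this]
    exact isClosed_biInter fun u _ ↦ isClosed_Iic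
  have hIcc : Icc a t ⊆ A := by
    refine (hA.inter isClosed_Icc).Icc_subset_of_forall_mem_nhdsWithin (by simp [A]) ?_
    rintro x ⟨hxA, hax, hxt⟩
    have hxs : x ∈ s := hstep x ⟨hax, hxt.trans ht.2⟩ hxA
    obtain ⟨m, hxm, hm⟩ :=
      mem_nhdsGT_iff_exists_Ioo_subset.1 (hopen x ⟨hxs, hax, hxt.trans ht.2⟩)
    filter_upwards [Ioo_mem_nhdsGT hxm] with y hy u hu
    rcases lt_trichotomy u x with hux | rfl | hxu
    · exact hxA ⟨hu.1, hux⟩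
    · exact hxs
    · exact hm ⟨hxu, hu.2.trans hy.2⟩
  exact hstep t ht (hIcc ⟨ht.1, le_rfl⟩)

theorem signs_persist_of_hasDerivAt {β γ T : ℝ} {X Y Z : ℝ → ℝ} (hβ : β ≤ 0) (hγ : γ ≤ 0)
    (hX₀ : X 0 < 0) (hZ₀ : Z 0 < 0) (hY₀ : 0 < Y 0)
    (hY : ∀ t ∈ Ico (0:ℝ) T, HasDerivAt Y (-(1 / 2) * X t * Y t) t)
    (hZ : ∀ t ∈ Ico (0:ℝ) T, HasDerivAt Z (X t * Y t + (1 / 2) * X t * Z t) t)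
    (hX : ∀ t ∈ Ico (0:ℝ) T, HasDerivAt X (β * Y t - γ * Z t) t) :
    ∀ t ∈ Ico (0:ℝ) T, X t < 0 ∧ Z t < 0 ∧ 0 < Y t := by
  refine Ico_subset_of_forall_mem_nhdsGT (fun t ht hsign ↦ ?_) fun t ⟨htsign, ht⟩ ↦ ?_
  · have hsub : Icc 0 t ⊆ Ico 0 T := Icc_subset_Ico_right ht.2
    have hsign' : ∀ u ∈ Ioo 0 t, X u < 0 ∧ Z u < 0 ∧ 0 < Y u :=
      fun u hu ↦ hsign (Ioo_subset_Ico_self hu)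
    have hYt : Y 0 ≤ Y t := le_of_hasDerivAt_nonneg ht.1 (fun u hu ↦ hY u (hsub hu))
      fun u hu ↦ by nlinarith [hsign' u hu]
    have hXt : X t ≤ X 0 := le_of_hasDerivAt_nonpos ht.1 (fun u hu ↦ hX u (hsub hu))
      fun u hu ↦ by nlinarith [hsign' u hu]
    -- `(YZ)' = XY² ≤ 0`
    have hYZt : Y t * Z t ≤ Y 0 * Z 0 :=
      le_of_hasDerivAt_nonpos ht.1 (fun u hu ↦ (hY u (hsub hu)).mul (hZ u (hsub hu)))
        fun u hu ↦ by nlinarith [hsign' u hu, mul_pos (hsign' u hu).2.2 (hsign' u hu).2.2]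
    refine ⟨by linarith, ?_, by linarith⟩
    nlinarith [mul_pos hY₀ (neg_pos.2 hZ₀)]
  · exact nhdsWithin_le_nhds <| ((hX t ht).continuousAt.eventually_lt_const htsign.1).and <|
      ((hZ t ht).continuousAt.eventually_lt_const htsign.2.1).and
        ((hY t ht).continuousAt.eventually_const_lt htsign.2.2)

theorem mul_sqrt_le_of_hasDerivAt {T b c : ℝ} {u u' v : ℝ → ℝ} (hc : 0 < c) (hc1 : c ≤ 1)
    (hcb : c ≤ 4 * b) (hc0 : c * v 0 ≤ u 0 ^ 2)
    (hu : ∀ t ∈ Ico 0 T, HasDerivAt u (u' t) t) (hu' : ∀ t ∈ Ico 0 T, b * v t ≤ u' t)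
    (hv : ∀ t ∈ Ico 0 T, HasDerivAt v (u t * v t / 2) t)
    (hupos : ∀ t ∈ Ico 0 T, 0 < u t) (hvpos : ∀ t ∈ Ico 0 T, 0 < v t) :
    ∀ t ∈ Ico 0 T, c * √(v t) ≤ u t := by
  intro t ht
  have hsub : Icc 0 t ⊆ Ico 0 T := Icc_subset_Ico_right ht.2
  have hsq : u 0 * u 0 - c * v 0 ≤ u t * u t - c * v t :=
    le_of_hasDerivAt_nonneg (f := fun x ↦ u x * u x - c * v x) ht.1
      (fun x hx ↦ ((hu x (hsub hx)).mul (hu x (hsub hx))).sub ((hv x (hsub hx)).const_mul c))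
      fun x hx ↦ by
        have hx' := hsub (Ioo_subset_Icc_self hx)
        nlinarith [mul_le_mul_of_nonneg_left (hu' x hx') (hupos x hx').le,
          mul_le_mul_of_nonneg_right hcb (mul_pos (hupos x hx') (hvpos x hx')).le]
  have hvt := hvpos t ht
  refine (pow_le_pow_iff_left₀ (by positivity) (hupos t ht).le two_ne_zero).1 ?_
  rw [mul_pow, Real.sq_sqrt hvt.le]
  nlinarith [mul_le_mul_of_nonneg_right hc1 (mul_pos hc hvt).le]

theorem lifespan_le_of_hasDerivAt {T b c : ℝ} {u u' v : ℝ → ℝ} (hc : 0 < c) (hc1 : c ≤ 1)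
    (hcb : c ≤ 4 * b) (hc0 : c * v 0 ≤ u 0 ^ 2)
    (hu : ∀ t ∈ Ico 0 T, HasDerivAt u (u' t) t) (hu' : ∀ t ∈ Ico 0 T, b * v t ≤ u' t)
    (hv : ∀ t ∈ Ico 0 T, HasDerivAt v (u t * v t / 2) t)
    (hupos : ∀ t ∈ Ico 0 T, 0 < u t) (hvpos : ∀ t ∈ Ico 0 T, 0 < v t) :
    T ≤ 4 / (c * √(v 0)) := by
  have hcu := mul_sqrt_le_of_hasDerivAt hc hc1 hcb hc0 hu hu' hv hupos hvpos
  by_contra! hT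
  have hv0 : 0 < v 0 := hvpos 0 ⟨le_rfl, lt_of_le_of_lt (by positivity) hT⟩
  set s := 4 / (c * √(v 0))
  have hsub : Icc 0 s ⊆ Ico 0 T := Icc_subset_Ico_right hT
  have hsqrt : ∀ t ∈ Icc 0 s, 0 < √(v t) := fun t ht ↦ Real.sqrt_pos.2 (hvpos t (hsub ht))
  have key := lt_of_hasDerivAt_le_neg (f := fun t ↦ (√(v t))⁻¹) (κ := c / 4) (by positivity)
    (fun t ht ↦ ((hv t (hsub ht)).sqrt (hvpos t (hsub ht)).ne').inv (hsqrt t ht).ne')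
    (fun t ht ↦ by
      have ht' := Ioo_subset_Icc_self ht
      have hvt := hvpos t (hsub ht')
      have hratio : c ≤ u t / √(v t) := (le_div_iff₀ (hsqrt t ht')).2 (hcu t (hsub ht'))
      have hderiv : -(u t * v t / 2 / (2 * √(v t))) / √(v t) ^ 2 = -(u t / √(v t)) / 4 := by
        rw [Real.sq_sqrt hvt.le]
        field_simp
        ring
      linarith)
    (inv_pos.2 (hsqrt s ⟨by positivity, le_rfl⟩))
  have : c / 4 * (s - 0) = (√(v 0))⁻¹ := by
    simp only [s, sub_zero]
    field_simp
  linarith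

/-- Corner ODE system `Ẏ = -(1/2)XY - C(t)Z`, `Ż = XY + (1/2)XZ - C(t)Y`, `Ẋ = βY - γZ`
with `β < 0`, `γ ≤ 0`, `C ≡ 0`, and initial signs `X(0) < 0`, `Z(0) < 0 < Y(0)`:
the signs persist as long as the solution exists, and the solution blows up in finite
time (there is a finite `T*` bounding the length of any interval of existence). -/
theorem stmt_17 (β γ X₀ Y₀ Z₀ : ℝ) (hβ : β < 0) (hγ : γ ≤ 0)
    (hX₀ : X₀ < 0) (hZ₀ : Z₀ < 0) (hY₀ : 0 < Y₀) :
    ∃ Tstar : ℝ, 0 < Tstar ∧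
      ∀ (T : ℝ) (C X Y Z : ℝ → ℝ),
        Continuous C → (∀ t, C t = 0) →
        (∀ t ∈ Ico (0:ℝ) T, HasDerivAt Y (-(1 / 2) * X t * Y t - C t * Z t) t) →
        (∀ t ∈ Ico (0:ℝ) T, HasDerivAt Z (X t * Y t + (1 / 2) * X t * Z t - C t * Y t) t) →
        (∀ t ∈ Ico (0:ℝ) T, HasDerivAt X (β * Y t - γ * Z t) t) →
        X 0 = X₀ → Y 0 = Y₀ → Z 0 = Z₀ →
        (∀ t ∈ Ico (0:ℝ) T, X t < 0 ∧ Z t < 0 ∧ 0 < Y t) ∧ T ≤ Tstar := by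
  obtain ⟨c, hc, hc1, hcβ, hcX⟩ : ∃ c : ℝ, 0 < c ∧ c ≤ 1 ∧ c ≤ 4 * -β ∧ c * Y₀ ≤ (-X₀) ^ 2 :=
    ⟨min 1 (min (4 * -β) (X₀ ^ 2 / Y₀)),
      lt_min one_pos (lt_min (by linarith) (div_pos (by nlinarith) hY₀)),
      min_le_left _ _, (min_le_right _ _).trans (min_le_left _ _),
      (le_div_iff₀ hY₀).1 ((min_le_right _ _).trans (min_le_right _ _)) |>.trans_eq (by ring)⟩
  refine ⟨4 / (c * √Y₀), by positivity, ?_⟩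
  rintro T C X Y Z - hC hY hZ hX rfl rfl rfl
  simp only [hC, zero_mul, sub_zero] at hY hZ
  have hsign := signs_persist_of_hasDerivAt hβ.le hγ hX₀ hZ₀ hY₀ hY hZ hX
  refine ⟨hsign, lifespan_le_of_hasDerivAt (u := -X) hc hc1 hcβ hcX (fun t ht ↦ (hX t ht).neg)
    (fun t ht ↦ ?_) (fun t ht ↦ (hY t ht).congr_deriv (by simp only [Pi.neg_apply]; ring))
    (fun t ht ↦ neg_pos.2 (hsign t ht).1) fun t ht ↦ (hsign t ht).2.2⟩
  nlinarith [(hsign t ht).2.1]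
end
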